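/- arXiv:math/0412454 — 5 statements merged into one kernel-verified Lean document; each statement's English description precedes it below -/
import Mathlib

section
/- Let S = {(s, sin(s²)) : s ∈ ℝ} ⊆ ℝ² and, for n ≥ 1, x_n = (√(πn), 0) (which lies in S). Then ‖x_{n+1} − x_n‖ → 0 as n → ∞, while the geodesic distance satisfies d^g(x_n, x_{n+1}) ≥ 2 for every n ≥ 1. In particular the Euclidean distance and the geodesic distance on S are not globally equivalent. -/
open MeasureTheory Set Filter
open scoped Topology ENNReal

noncomputable section

/-- The point `(a, b)` of the Euclidean plane. -/
def pt (a b : ℝ) : EuclideanSpace ℝ (Fin 2) :=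
  (WithLp.equiv 2 (Fin 2 → ℝ)).symm ![a, b]

/-- A continuous path inside `S` from `x` to `y`, parameterized on `[0,1]`. -/
def IsPathIn {H : Type*} [NormedAddCommGroup H] (S : Set H) (x y : H) (γ : ℝ → H) : Prop :=
  ContinuousOn γ (Set.Icc 0 1) ∧ Set.MapsTo γ (Set.Icc 0 1) S ∧ γ 0 = x ∧ γ 1 = y

/-- The length of a path is its total variation on `[0,1]`. -/
def pathLength {H : Type*} [NormedAddCommGroup H] (γ : ℝ → H) : ℝ≥0∞ :=
  eVariationOn γ (Set.Icc 0 1)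

/-- The geodesic distance in `S`: infimum of lengths of continuous paths in `S`. -/
def geodesicDist {H : Type*} [NormedAddCommGroup H] (S : Set H) (x y : H) : ℝ≥0∞ :=
  ⨅ γ : {γ : ℝ → H // IsPathIn S x y γ}, pathLength γ.1

/-- The graph of `s ↦ sin (s²)`. -/
def graphS : Set (EuclideanSpace ℝ (Fin 2)) :=
  {p | ∃ s : ℝ, p = pt s (Real.sin (s ^ 2))}

lemma pt_apply0 (a b : ℝ) : pt a b 0 = a := rfl
lemma pt_apply1 (a b : ℝ) : pt a b 1 = b := rfl

lemma pt_sub (a b c d : ℝ) : pt a b - pt c d = pt (a - c) (b - d) := by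
  ext i; fin_cases i <;> simp [pt]

lemma norm_pt (a b : ℝ) : ‖pt a b‖ = Real.sqrt (a ^ 2 + b ^ 2) := by
  rw [EuclideanSpace.norm_eq]
  simp [pt, Fin.sum_univ_two, sq_abs]

lemma coord_edist_le (p q : EuclideanSpace ℝ (Fin 2)) (i : Fin 2) :
    edist (p i) (q i) ≤ edist p q := by
  rw [edist_dist, edist_dist]
  apply ENNReal.ofReal_le_ofReal
  rw [EuclideanSpace.dist_eq]
  have h : dist (p i) (q i) = Real.sqrt (dist (p i) (q i) ^ 2) := by
    rw [Real.sqrt_sq dist_nonneg]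
  rw [h]
  exact Real.sqrt_le_sqrt <| Finset.single_le_sum
    (f := fun j => dist (p j) (q j) ^ 2) (fun j _ => sq_nonneg _) (Finset.mem_univ i)

lemma sqrt_bound (n : ℕ) (hn : 1 ≤ n) :
    Real.sqrt (Real.pi * (n + 1)) - Real.sqrt (Real.pi * n) ≤ Real.sqrt (Real.pi / n) := by
  have hn' : (1 : ℝ) ≤ n := by exact_mod_cast hn
  have hπ := Real.pi_pos
  have h1 : Real.sqrt (Real.pi * (n + 1)) ≤ Real.sqrt (Real.pi * n) + Real.sqrt (Real.pi / n) := by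
    rw [Real.sqrt_le_iff]
    constructor
    · positivity
    · have e1 : Real.sqrt (Real.pi * n) ^ 2 = Real.pi * n := Real.sq_sqrt (by positivity)
      have e2 : Real.sqrt (Real.pi / n) ^ 2 = Real.pi / n := Real.sq_sqrt (by positivity)
      have e3 : Real.sqrt (Real.pi * n) * Real.sqrt (Real.pi / n) = Real.pi := by
        rw [← Real.sqrt_mul (by positivity),
          show Real.pi * n * (Real.pi / n) = Real.pi ^ 2 by field_simp]
        exact Real.sqrt_sq hπ.le
      have h4 : 0 < Real.pi / n := by positivity
      nlinarith [e1, e2, e3, h4]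
  linarith

theorem stmt3 (x : ℕ → EuclideanSpace ℝ (Fin 2))
    (hx : ∀ n : ℕ, x n = pt (Real.sqrt (Real.pi * n)) 0) :
    (∀ n : ℕ, 1 ≤ n → x n ∈ graphS) ∧
    Tendsto (fun n : ℕ => ‖x (n + 1) - x n‖) atTop (𝓝 0) ∧
    (∀ n : ℕ, 1 ≤ n → ENNReal.ofReal 2 ≤ geodesicDist graphS (x n) (x (n + 1))) ∧
    ¬ ∃ K : ℝ≥0∞, K ≠ ⊤ ∧ ∀ p ∈ graphS, ∀ q ∈ graphS,
        geodesicDist graphS p q ≤ K * edist p q := by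
  have hπ := Real.pi_pos
  -- Part 1
  have part1 : ∀ n : ℕ, 1 ≤ n → x n ∈ graphS := by
    intro n _
    refine ⟨Real.sqrt (Real.pi * n), ?_⟩
    rw [hx, Real.sq_sqrt (by positivity), mul_comm, Real.sin_nat_mul_pi]
  -- the norm computation
  have hnorm : ∀ n : ℕ, ‖x (n + 1) - x n‖
      = Real.sqrt (Real.pi * (n + 1)) - Real.sqrt (Real.pi * n) := by
    intro n
    have hle : Real.sqrt (Real.pi * n) ≤ Real.sqrt (Real.pi * (n + 1)) :=
      Real.sqrt_le_sqrt (by nlinarith)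
    rw [hx, hx, pt_sub, norm_pt]
    push_cast
    rw [show (0:ℝ) - 0 = 0 by ring, zero_pow two_ne_zero, add_zero, Real.sqrt_sq_eq_abs,
      abs_of_nonneg (by linarith)]
  -- Part 2
  have part2 : Tendsto (fun n : ℕ => ‖x (n + 1) - x n‖) atTop (𝓝 0) := by
    apply squeeze_zero' (g := fun n : ℕ => Real.sqrt (Real.pi / n))
    · filter_upwards with n
      rw [hnorm n]
      have : Real.sqrt (Real.pi * n) ≤ Real.sqrt (Real.pi * (n + 1)) :=
        Real.sqrt_le_sqrt (by nlinarith)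
      linarith
    · filter_upwards [eventually_ge_atTop 1] with n hn
      rw [hnorm n]
      exact sqrt_bound n hn
    · have h0 : Tendsto (fun n : ℕ => Real.pi / n) atTop (𝓝 0) :=
        tendsto_const_div_atTop_nhds_zero_nat _
      have := (Real.continuous_sqrt.tendsto' 0 0 Real.sqrt_zero).comp h0
      exact this
  -- Part 3
  have part3 : ∀ n : ℕ, 1 ≤ n →
      ENNReal.ofReal 2 ≤ geodesicDist graphS (x n) (x (n + 1)) := by
    intro n hn
    refine le_iInf ?_
    rintro ⟨γ, hcont, hmaps, h0, h1⟩
    -- first coordinate function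
    have hevc : Continuous fun p : EuclideanSpace ℝ (Fin 2) => p (0 : Fin 2) :=
      (continuous_apply _).comp (PiLp.continuous_ofLp 2 _)
    set f : ℝ → ℝ := fun t => γ t (0 : Fin 2) with hf
    have fcont : ContinuousOn f (Icc 0 1) := hevc.comp_continuousOn hcont
    set m : ℝ := Real.sqrt (Real.pi * n + Real.pi / 2) with hm
    have hf0 : f 0 = Real.sqrt (Real.pi * n) := by rw [hf]; simp only; rw [h0, hx, pt_apply0]
    have hf1 : f 1 = Real.sqrt (Real.pi * (n + 1)) := by
      rw [hf]; simp only; rw [h1, hx, pt_apply0]; push_cast; ring_nf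
    have hmem : m ∈ Icc (f 0) (f 1) := by
      rw [hf0, hf1]
      constructor
      · exact Real.sqrt_le_sqrt (by linarith)
      · exact Real.sqrt_le_sqrt (by linarith)
    obtain ⟨t, ht, hft⟩ := intermediate_value_Icc (by norm_num : (0:ℝ) ≤ 1) fcont hmem
    -- the value of the second coordinate at t
    obtain ⟨s, hs⟩ := hmaps ht
    have hsm : s = m := by
      have : f t = s := by rw [hf]; simp only; rw [hs, pt_apply0]
      rw [← this, hft]
    have hm2 : m ^ 2 = Real.pi * n + Real.pi / 2 := Real.sq_sqrt (by positivity)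
    set c : ℝ := Real.sin (Real.pi * n + Real.pi / 2) with hc
    have hγt1 : γ t (1 : Fin 2) = c := by rw [hs, pt_apply1, hsm, hm2]
    have hc1 : |c| = 1 := by
      have hsin : Real.sin (Real.pi * n) = 0 := by rw [mul_comm]; exact Real.sin_nat_mul_pi n
      have : c = Real.cos (Real.pi * n) := by
        rw [hc, Real.sin_add, Real.sin_pi_div_two, Real.cos_pi_div_two, hsin]; ring
      have hsq : c ^ 2 = 1 := by
        rw [this]
        nlinarith [Real.sin_sq_add_cos_sq (Real.pi * n), hsin]
      nlinarith [abs_nonneg c, sq_abs c]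
    -- endpoints have second coordinate zero
    have hγ01 : γ 0 (1 : Fin 2) = 0 := by rw [h0, hx, pt_apply1]
    have hγ11 : γ 1 (1 : Fin 2) = 0 := by rw [h1, hx, pt_apply1]
    -- partition 0 ≤ t ≤ 1
    set u : ℕ → ℝ := fun i => if i = 0 then 0 else if i = 1 then t else 1 with hu
    have humem : ∀ i, u i ∈ Icc (0:ℝ) 1 := by
      intro i
      rcases i with _ | _ | i <;> simp [hu]
      · exact ⟨ht.1, ht.2⟩
    have humono : Monotone u := by
      apply monotone_nat_of_le_succ
      intro i
      rcases i with _ | _ | i <;> simp [hu]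
      · exact ht.1
      · exact ht.2
    have hkey := eVariationOn.sum_le (f := γ) (n := 2) humono humem
    have hu0 : u 0 = 0 := by simp [hu]
    have hu1 : u 1 = t := by simp [hu]
    have hu2 : u 2 = 1 := by simp [hu]
    rw [Finset.sum_range_succ, Finset.sum_range_one, hu0, hu1, hu2] at hkey
    have hd1 : ENNReal.ofReal 1 ≤ edist (γ t) (γ 0) := by
      refine le_trans ?_ (coord_edist_le (γ t) (γ 0) 1)
      rw [hγt1, hγ01, edist_dist, Real.dist_eq, sub_zero, hc1]
    have hd2 : ENNReal.ofReal 1 ≤ edist (γ 1) (γ t) := by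
      refine le_trans ?_ (coord_edist_le (γ 1) (γ t) 1)
      rw [hγt1, hγ11, edist_dist, Real.dist_eq, zero_sub, abs_neg, hc1]
    calc ENNReal.ofReal 2 = ENNReal.ofReal 1 + ENNReal.ofReal 1 := by
          rw [← ENNReal.ofReal_add] <;> norm_num
      _ ≤ edist (γ t) (γ 0) + edist (γ 1) (γ t) := add_le_add hd1 hd2
      _ ≤ eVariationOn γ (Icc 0 1) := hkey
      _ = pathLength γ := rfl
  refine ⟨part1, part2, part3, ?_⟩
  -- Part 4
  rintro ⟨K, hK, hbound⟩
  have hten : Tendsto (fun n : ℕ => K * edist (x n) (x (n + 1))) atTop (𝓝 0) := by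
    have h1 : Tendsto (fun n : ℕ => edist (x n) (x (n + 1))) atTop (𝓝 0) := by
      have : (fun n : ℕ => edist (x n) (x (n + 1)))
          = fun n : ℕ => ENNReal.ofReal ‖x (n + 1) - x n‖ := by
        funext n
        rw [edist_comm, edist_dist, dist_eq_norm]
      rw [this]
      simpa using ENNReal.tendsto_ofReal part2
    simpa using ENNReal.Tendsto.const_mul h1 (Or.inr hK)
  have h2pos : (0 : ℝ≥0∞) < ENNReal.ofReal 2 := by norm_num
  obtain ⟨n, hlt, hn1⟩ := ((hten.eventually_lt_const h2pos).and (eventually_ge_atTop 1)).exists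
  have hmemn := part1 n hn1
  have hmemn1 := part1 (n + 1) (by omega)
  have := (part3 n hn1).trans (hbound _ hmemn _ hmemn1)
  exact absurd (this.trans_lt hlt) (lt_irrefl _)
end
end

section
/- Let C : ℝ × [0,1] → ℝⁿ be a C¹ homotopy of closed curves with ∂_θC(θ,v) ≠ 0 everywhere, and let φ : ℝ × [0,1] → ℝ be C¹ with φ(θ+2π, v) = φ(θ,v) + 2π and ∂_θφ(θ,v) > 0 for all θ, v. Define the reparameterized homotopy C̃(θ,v) = C(φ(θ,v), v). Then the normal velocity is unchanged, π_Ñ ∂_vC̃(θ,v) = (π_N ∂_vC)(φ(θ,v), v) (where π_Ñ is the projection orthogonal to ∂_θC̃), and consequently E^N(C̃) = E^N(C): the geometric H⁰ energy is invariant under reparameterizations of homotopies. -/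
open MeasureTheory Set Filter intervalIntegral
open scoped Topology ENNReal RealInnerProductSpace

noncomputable section

/-- Projection of `h` onto the orthogonal complement of `W`
(with the convention `T = 0`, `projN W h = h`, when `W = 0`). -/
def projN {E : Type*} [NormedAddCommGroup E] [InnerProductSpace ℝ E] (W h : E) : E :=
  h - ⟪h, ‖W‖⁻¹ • W⟫ • (‖W‖⁻¹ • W)

lemma projN_reparam {E : Type*} [NormedAddCommGroup E] [InnerProductSpace ℝ E]
    (W h : E) (c a : ℝ) (hc : 0 < c) :
    projN (c • W) (h + a • W) = projN W h := by
  by_cases hW : W = 0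
  · simp [projN, hW]
  · have hWn : ‖W‖ ≠ 0 := norm_ne_zero_iff.2 hW
    have hu : ‖c • W‖⁻¹ • (c • W) = ‖W‖⁻¹ • W := by
      rw [norm_smul, Real.norm_of_nonneg hc.le, smul_smul]
      congr 1
      field_simp
    unfold projN
    rw [hu]
    have hWu : ⟪W, ‖W‖⁻¹ • W⟫ = ‖W‖ := by
      rw [real_inner_smul_right, real_inner_self_eq_norm_sq]
      field_simp
    rw [inner_add_left, real_inner_smul_left, hWu, add_smul, smul_smul, smul_smul]
    have : a * ‖W‖ * ‖W‖⁻¹ = a := by field_simp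
    rw [this]
    abel

theorem stmt7 (n : ℕ)
    (C Cθ Cv : ℝ → ℝ → EuclideanSpace ℝ (Fin n)) (φ φθ φv : ℝ → ℝ → ℝ)
    -- `C` is a C¹ homotopy of closed curves with partial derivatives `Cθ`, `Cv` …
    (hCθ : ∀ θ v, HasDerivAt (fun t => C t v) (Cθ θ v) θ)
    (hCv : ∀ θ v, HasDerivAt (fun t => C θ t) (Cv θ v) v)
    (hCθc : Continuous fun p : ℝ × ℝ => Cθ p.1 p.2)
    (hCvc : Continuous fun p : ℝ × ℝ => Cv p.1 p.2)
    (hper : ∀ θ v, C (θ + 2 * Real.pi) v = C θ v)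
    -- … immersed at every point …
    (hne : ∀ θ v, Cθ θ v ≠ 0)
    -- `φ` is a C¹ reparameterization with `φ(θ+2π,v) = φ(θ,v)+2π` and `∂_θφ > 0`:
    (hφθ : ∀ θ v, HasDerivAt (fun t => φ t v) (φθ θ v) θ)
    (hφv : ∀ θ v, HasDerivAt (fun t => φ θ t) (φv θ v) v)
    (hφθc : Continuous fun p : ℝ × ℝ => φθ p.1 p.2)
    (hφvc : Continuous fun p : ℝ × ℝ => φv p.1 p.2)
    (hφper : ∀ θ v, φ (θ + 2 * Real.pi) v = φ θ v + 2 * Real.pi)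
    (hφpos : ∀ θ v, 0 < φθ θ v) :
    -- the reparameterized homotopy `C̃(θ,v) = C(φ(θ,v),v)` has partial derivatives
    -- `∂_θC̃ = φθ • Cθ∘φ` and `∂_vC̃ = Cv∘φ + φv • Cθ∘φ`; its normal velocity is unchanged:
    (∀ θ v, projN (φθ θ v • Cθ (φ θ v) v) (Cv (φ θ v) v + φv θ v • Cθ (φ θ v) v)
        = projN (Cθ (φ θ v) v) (Cv (φ θ v) v)) ∧
    -- and the geometric H⁰ energy is invariant: `E^N(C̃) = E^N(C)`.
    (∫ v in (0:ℝ)..1, ∫ θ in (0:ℝ)..(2 * Real.pi),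
        ‖projN (φθ θ v • Cθ (φ θ v) v) (Cv (φ θ v) v + φv θ v • Cθ (φ θ v) v)‖ ^ 2
          * ‖φθ θ v • Cθ (φ θ v) v‖)
      = ∫ v in (0:ℝ)..1, ∫ θ in (0:ℝ)..(2 * Real.pi),
          ‖projN (Cθ θ v) (Cv θ v)‖ ^ 2 * ‖Cθ θ v‖ := by
  -- periodicity of the partial derivatives
  have hCθper : ∀ θ v, Cθ (θ + 2 * Real.pi) v = Cθ θ v := by
    intro θ v
    have h1 : HasDerivAt (fun t => C (t + 2 * Real.pi) v) (Cθ (θ + 2 * Real.pi) v) θ := by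
      have := (hCθ (θ + 2 * Real.pi) v).scomp θ
        ((hasDerivAt_id θ).add_const (2 * Real.pi))
      simpa [Function.comp_def] using this
    have h2 : (fun t => C (t + 2 * Real.pi) v) = fun t => C t v := funext fun t => hper t v
    rw [h2] at h1
    exact h1.unique (hCθ θ v)
  have hCvper : ∀ θ v, Cv (θ + 2 * Real.pi) v = Cv θ v := by
    intro θ v
    have h1 := hCv (θ + 2 * Real.pi) v
    have h2 : (fun t => C (θ + 2 * Real.pi) t) = fun t => C θ t := funext fun t => hper θ t
    rw [h2] at h1
    exact h1.unique (hCv θ v)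
  constructor
  · intro θ v
    exact projN_reparam _ _ _ _ (hφpos θ v)
  · refine intervalIntegral.integral_congr fun v _ => ?_
    set g : ℝ → ℝ := fun s => ‖projN (Cθ s v) (Cv s v)‖ ^ 2 * ‖Cθ s v‖ with hg_def
    have hcθ : Continuous fun s => Cθ s v :=
      hCθc.comp (continuous_id.prodMk continuous_const)
    have hcv : Continuous fun s => Cv s v :=
      hCvc.comp (continuous_id.prodMk continuous_const)
    have hninv : Continuous fun s => (‖Cθ s v‖)⁻¹ :=
      hcθ.norm.inv₀ fun s => norm_ne_zero_iff.2 (hne s v)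
    have hT : Continuous fun s => (‖Cθ s v‖)⁻¹ • Cθ s v := hninv.smul hcθ
    have hproj : Continuous fun s => projN (Cθ s v) (Cv s v) := by
      unfold projN
      exact hcv.sub (((hcv.inner hT : Continuous fun s => ⟪Cv s v, ‖Cθ s v‖⁻¹ • Cθ s v⟫)).smul hT)
    have hg : Continuous g := (hproj.norm.pow 2).mul hcθ.norm
    have hgper : Function.Periodic g (2 * Real.pi) := by
      intro s
      simp only [hg_def, hCθper, hCvper]
    -- rewrite the integrand
    have key : ∀ θ,
        ‖projN (φθ θ v • Cθ (φ θ v) v) (Cv (φ θ v) v + φv θ v • Cθ (φ θ v) v)‖ ^ 2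
          * ‖φθ θ v • Cθ (φ θ v) v‖
        = φθ θ v • g (φ θ v) := by
      intro θ
      rw [projN_reparam _ _ _ _ (hφpos θ v), norm_smul,
        Real.norm_of_nonneg (hφpos θ v).le, hg_def]
      simp only [smul_eq_mul]
      ring
    rw [intervalIntegral.integral_congr (fun θ _ => key θ)]
    have hsub : (∫ θ in (0:ℝ)..(2 * Real.pi), φθ θ v • g (φ θ v))
        = ∫ s in φ 0 v..φ (2 * Real.pi) v, g s := by
      have := intervalIntegral.integral_comp_smul_deriv
        (f := fun θ => φ θ v) (f' := fun θ => φθ θ v) (g := g)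
        (a := 0) (b := 2 * Real.pi)
        (fun x _ => hφθ x v)
        ((hφθc.comp (continuous_id.prodMk continuous_const)).continuousOn)
        hg
      simpa [Function.comp] using this
    rw [hsub]
    have hφ2π : φ (2 * Real.pi) v = φ 0 v + 2 * Real.pi := by
      have := hφper 0 v
      simpa using this
    rw [hφ2π]
    have := hgper.intervalIntegral_add_eq (φ 0 v) 0
    simpa using this
end
end

section
/- Let C : ℝ × [0,1] → ℝⁿ be a C¹ homotopy of closed curves with ∂_θC(θ,v) ≠ 0 everywhere. Then there exists φ : ℝ × [0,1] → ℝ, continuous, with φ(θ+2π, v) = φ(θ,v) + 2π, such that each φ(·,v) is C¹ with ∂_θφ(θ,v) > 0 and the reparameterized homotopy C̃(θ,v) = C(φ(θ,v), v) has constant speed along each curve: |∂_θC̃(θ,v)| = len(C)(v)/(2π) for all θ, v. -/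
open MeasureTheory Set Filter intervalIntegral
open scoped Topology ENNReal

set_option maxHeartbeats 1000000
noncomputable section

theorem stmt8 (n : ℕ) (C Cθ : ℝ → ℝ → EuclideanSpace ℝ (Fin n))
    -- `C` is a C¹ homotopy of closed curves with `θ`-derivative `Cθ` …
    (hCθ : ∀ θ v, HasDerivAt (fun t => C t v) (Cθ θ v) θ)
    (hCθc : Continuous fun p : ℝ × ℝ => Cθ p.1 p.2)
    (hper : ∀ θ v, C (θ + 2 * Real.pi) v = C θ v)
    -- … immersed at every point:
    (hne : ∀ θ v, Cθ θ v ≠ 0) :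
    -- there is a continuous reparameterization `φ`, `2π`-equivariant in `θ`, C¹ in `θ`
    -- with `∂_θφ > 0`, such that `C̃(θ,v) = C(φ(θ,v),v)` has constant speed
    -- `|∂_θC̃(θ,v)| = len(C)(v)/(2π)`:
    ∃ φ φθ : ℝ → ℝ → ℝ,
      Continuous (fun p : ℝ × ℝ => φ p.1 p.2) ∧
      (∀ θ v, φ (θ + 2 * Real.pi) v = φ θ v + 2 * Real.pi) ∧
      (∀ θ v, HasDerivAt (fun t => φ t v) (φθ θ v) θ) ∧
      (∀ θ v, 0 < φθ θ v) ∧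
      (∀ θ v, ‖φθ θ v • Cθ (φ θ v) v‖
          = (∫ t in (0:ℝ)..(2 * Real.pi), ‖Cθ t v‖) / (2 * Real.pi)) := by
  have hπ : (0:ℝ) < 2 * Real.pi := by positivity
  obtain ⟨f, hfdef⟩ : ∃ f : ℝ → ℝ → ℝ, f = fun θ v => ‖Cθ θ v‖ := ⟨_, rfl⟩
  have hfc : Continuous fun p : ℝ × ℝ => f p.1 p.2 := by rw [hfdef]; fun_prop
  have hfc1 : ∀ v, Continuous fun θ => f θ v := fun v =>
    hfc.comp (continuous_id.prodMk continuous_const)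
  have hfpos : ∀ θ v, 0 < f θ v := fun θ v => by rw [hfdef]; exact norm_pos_iff.2 (hne θ v)
  -- periodicity of the derivative
  have hCθper : ∀ θ v, Cθ (θ + 2 * Real.pi) v = Cθ θ v := by
    intro θ v
    have h1 : HasDerivAt (fun t => C (t + 2 * Real.pi) v) (Cθ (θ + 2 * Real.pi) v) θ :=
      HasDerivAt.comp_add_const θ (2 * Real.pi) (hCθ (θ + 2 * Real.pi) v)
    have h2 : (fun t => C (t + 2 * Real.pi) v) = fun t => C t v := funext fun t => hper t v
    rw [h2] at h1
    exact h1.unique (hCθ θ v)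
  have hfper : ∀ v, Function.Periodic (fun θ => f θ v) (2 * Real.pi) := fun v θ => by
    rw [hfdef]; simp only [hCθper θ v]
  have hint : ∀ (a b v : ℝ), IntervalIntegrable (fun θ => f θ v) volume a b := fun a b v =>
    (hfc1 v).intervalIntegrable a b
  obtain ⟨s, hsdef⟩ : ∃ s : ℝ → ℝ → ℝ, s = fun θ v => ∫ t in (0:ℝ)..θ, f t v := ⟨_, rfl⟩
  have hsderiv : ∀ θ v, HasDerivAt (fun x => s x v) (f θ v) θ := fun θ v => by
    rw [hsdef]
    exact integral_hasDerivAt_right (hint 0 θ v) ((hfc1 v).stronglyMeasurableAtFilter _ _)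
      (hfc1 v).continuousAt
  have hsmono : ∀ v, StrictMono fun θ => s θ v := by
    intro v
    apply strictMono_of_deriv_pos
    intro x
    rw [(hsderiv x v).deriv]
    exact hfpos x v
  obtain ⟨L, hLdef⟩ : ∃ L : ℝ → ℝ, L = fun v => s (2 * Real.pi) v := ⟨_, rfl⟩
  have hLpos : ∀ v, 0 < L v := fun v => by
    rw [hLdef, hsdef]
    exact intervalIntegral_pos_of_pos (hint 0 _ v) (fun x => hfpos x v) hπ
  -- additivity
  have hsadd : ∀ θ v, s (θ + 2 * Real.pi) v = s θ v + L v := by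
    intro θ v
    have h1 : s (θ + 2 * Real.pi) v
        = (∫ t in (0:ℝ)..(2*Real.pi), f t v) + ∫ t in (2*Real.pi)..(θ + 2*Real.pi), f t v := by
      rw [hsdef]
      exact (integral_add_adjacent_intervals (hint _ _ v) (hint _ _ v)).symm
    have h2 : (∫ t in (2*Real.pi)..(θ + 2*Real.pi), f t v) = ∫ t in (0:ℝ)..θ, f t v := by
      have h3 := intervalIntegral.integral_comp_add_right (a := (0:ℝ)) (b := θ)
        (fun t => f t v) (2*Real.pi)
      rw [zero_add] at h3
      rw [← h3]
      exact intervalIntegral.integral_congr fun t _ => hfper v t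
    rw [h1, h2, hLdef, hsdef]; ring
  -- joint continuity of s
  have hscont : Continuous fun p : ℝ × ℝ => s p.1 p.2 := by
    rw [hsdef]
    have h := continuous_parametric_primitive_of_continuous (μ := volume) (a₀ := (0:ℝ))
      (f := fun v θ => f θ v) (hfc.comp continuous_swap)
    have h2 := h.comp continuous_swap
    simp only [Function.comp_def, Prod.fst_swap, Prod.snd_swap] at h2
    exact h2
  have hLcont : Continuous L := by
    rw [hLdef]; exact hscont.comp (continuous_const.prodMk continuous_id)
  -- surjectivity
  have hssurj : ∀ v, Function.Surjective fun θ => s θ v := by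
    intro v
    refine Continuous.surjective ((hscont.comp (continuous_id.prodMk continuous_const)) : _) ?_ ?_
    · rw [hsdef]
      exact (hfper v).tendsto_atTop_intervalIntegral_of_pos' (hint 0 (2 * Real.pi) v)
        (fun x => hfpos x v) hπ
    · rw [hsdef]
      exact (hfper v).tendsto_atBot_intervalIntegral_of_pos' (hint 0 (2 * Real.pi) v)
        (fun x => hfpos x v) hπ
  obtain ⟨c, hcdef⟩ : ∃ c : ℝ → ℝ, c = fun v => L v / (2 * Real.pi) := ⟨_, rfl⟩
  have hcpos : ∀ v, 0 < c v := fun v => by rw [hcdef]; exact div_pos (hLpos v) hπ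
  have hccont : Continuous c := by rw [hcdef]; exact hLcont.div_const _
  choose φ hφ0 using fun θ v => hssurj v (c v * θ)
  have hφ : ∀ θ v, s (φ θ v) v = c v * θ := hφ0
  -- here φ : (θ v : ℝ) → ℝ with s (φ θ v) v = c v * θ
  have hinj : ∀ v, Function.Injective fun θ => s θ v := fun v => (hsmono v).injective
  -- equivariance
  have hequiv : ∀ θ v, φ (θ + 2 * Real.pi) v = φ θ v + 2 * Real.pi := by
    intro θ v
    apply hinj v
    show s (φ (θ + 2 * Real.pi) v) v = s (φ θ v + 2 * Real.pi) v
    rw [hφ, hsadd, hφ, hcdef]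
    field_simp
  -- joint continuity of φ
  have hφcont : Continuous fun p : ℝ × ℝ => φ p.1 p.2 := by
    rw [continuous_iff_continuousAt]
    rintro ⟨θ₀, v₀⟩
    rw [ContinuousAt, tendsto_order]
    constructor
    · intro b hb
      have h1 : s b v₀ < c v₀ * θ₀ := by
        rw [← hφ θ₀ v₀]; exact hsmono v₀ hb
      have h2 : ∀ᶠ p : ℝ × ℝ in 𝓝 (θ₀, v₀), s b p.2 < c p.2 * p.1 := by
        have hc : Continuous fun p : ℝ × ℝ => c p.2 * p.1 - s b p.2 := by
          apply Continuous.sub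
          · exact (hccont.comp continuous_snd).mul continuous_fst
          · exact hscont.comp (continuous_const.prodMk continuous_snd)
        have hpt : (0:ℝ) < c v₀ * θ₀ - s b v₀ := sub_pos.2 h1
        have := (hc.tendsto (θ₀, v₀)).eventually (eventually_gt_nhds hpt)
        filter_upwards [this] with p hp using by simpa [sub_pos] using hp
      filter_upwards [h2] with p hp
      by_contra hle
      push_neg at hle
      have hm := (hsmono p.2).monotone hle
      rw [hφ] at hm
      exact absurd (lt_of_lt_of_le hp hm) (lt_irrefl _)
    · intro b hb
      have h1 : c v₀ * θ₀ < s b v₀ := by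
        rw [← hφ θ₀ v₀]; exact hsmono v₀ hb
      have h2 : ∀ᶠ p : ℝ × ℝ in 𝓝 (θ₀, v₀), c p.2 * p.1 < s b p.2 := by
        have hc : Continuous fun p : ℝ × ℝ => s b p.2 - c p.2 * p.1 := by
          apply Continuous.sub
          · exact hscont.comp (continuous_const.prodMk continuous_snd)
          · exact (hccont.comp continuous_snd).mul continuous_fst
        have hpt : (0:ℝ) < s b v₀ - c v₀ * θ₀ := sub_pos.2 h1
        have := (hc.tendsto (θ₀, v₀)).eventually (eventually_gt_nhds hpt)
        filter_upwards [this] with p hp using by simpa [sub_pos] using hp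
      filter_upwards [h2] with p hp
      by_contra hle
      push_neg at hle
      have hm := (hsmono p.2).monotone hle
      rw [hφ] at hm
      exact absurd (lt_of_le_of_lt hm hp) (lt_irrefl _)
  -- derivative of φ
  obtain ⟨φθ, hφθdef⟩ : ∃ φθ : ℝ → ℝ → ℝ, φθ = fun θ v => (f (φ θ v) v / c v)⁻¹ := ⟨_, rfl⟩
  have hφderiv : ∀ θ v, HasDerivAt (fun t => φ t v) (φθ θ v) θ := by
    intro θ v
    have hg : ContinuousAt (fun t => φ t v) θ :=
      (hφcont.comp (continuous_id.prodMk continuous_const)).continuousAt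
    have hF : HasDerivAt (fun x => s x v / c v) (f (φ θ v) v / c v) (φ θ v) :=
      (hsderiv (φ θ v) v).div_const _
    have hne' : f (φ θ v) v / c v ≠ 0 :=
      ne_of_gt (div_pos (hfpos _ _) (hcpos v))
    have hfg : ∀ᶠ y in 𝓝 θ, s (φ y v) v / c v = y :=
      Eventually.of_forall fun y => by
        rw [hφ]; field_simp [ne_of_gt (hcpos v)]
    rw [hφθdef]
    exact hF.of_local_left_inverse hg hne' hfg
  have hφθpos : ∀ θ v, 0 < φθ θ v := fun θ v => by
    rw [hφθdef]
    exact inv_pos.2 (div_pos (hfpos _ _) (hcpos v))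
  refine ⟨φ, φθ, hφcont, hequiv, hφderiv, hφθpos, ?_⟩
  intro θ v
  rw [norm_smul, Real.norm_eq_abs, abs_of_pos (hφθpos θ v)]
  have key : φθ θ v * f (φ θ v) v = c v := by
    rw [hφθdef]
    have h1 : f (φ θ v) v ≠ 0 := ne_of_gt (hfpos (φ θ v) v)
    have h2 : c v ≠ 0 := ne_of_gt (hcpos v)
    field_simp
  have hfeq : ‖Cθ (φ θ v) v‖ = f (φ θ v) v := by rw [hfdef]
  have hinteq : (∫ t in (0:ℝ)..(2 * Real.pi), ‖Cθ t v‖) = L v := by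
    rw [hLdef, hsdef, hfdef]
  rw [hfeq, hinteq, key, hcdef]
end
end

section
/- Let C : ℝ × [0,1] → ℝⁿ be a C² homotopy of closed curves with ∂_θC(θ,v) ≠ 0 everywhere. Then for all 0 ≤ v′ < v″ ≤ 1, |√(len(C)(v″)) − √(len(C)(v′))| ≤ (√(J(C))/2)·√(v″ − v′). In particular, if J(C) < ∞ then v ↦ √(len(C)(v)) is Hölder continuous of exponent 1/2. -/
open MeasureTheory Set Filter intervalIntegral
open scoped Topology ENNReal RealInnerProductSpace

noncomputable section

-- Cauchy-Schwarz for interval integrals of continuous functions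
lemma cs_integral {f g : ℝ → ℝ} (hf : Continuous f) (hg : Continuous g) {a b : ℝ} (hab : a ≤ b) :
    (∫ x in a..b, f x * g x) ^ 2 ≤ (∫ x in a..b, f x ^ 2) * (∫ x in a..b, g x ^ 2) := by
  set A := ∫ x in a..b, f x ^ 2 with hA
  set B := ∫ x in a..b, f x * g x with hB
  set Cc := ∫ x in a..b, g x ^ 2 with hCc
  have i1 : IntervalIntegrable (fun x => f x ^ 2) volume a b := (hf.pow 2).intervalIntegrable a b
  have i2 : IntervalIntegrable (fun x => f x * g x) volume a b := (hf.mul hg).intervalIntegrable a b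
  have i3 : IntervalIntegrable (fun x => g x ^ 2) volume a b := (hg.pow 2).intervalIntegrable a b
  have key : ∀ t : ℝ, 0 ≤ A * (t * t) + (2 * B) * t + Cc := by
    intro t
    have h0 : (0:ℝ) ≤ ∫ x in a..b, (t * f x + g x) ^ 2 :=
      intervalIntegral.integral_nonneg hab (fun x _ => sq_nonneg _)
    have he : (∫ x in a..b, (t * f x + g x) ^ 2)
        = A * (t * t) + (2 * B) * t + Cc := by
      have : (fun x => (t * f x + g x) ^ 2)
          = fun x => (t*t) * f x ^ 2 + ((2*t) * (f x * g x) + g x ^ 2) := by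
        funext x; ring
      rw [this, intervalIntegral.integral_add ((i1.const_mul _))
          (((i2.const_mul _)).add i3),
        intervalIntegral.integral_add ((i2.const_mul _)) i3,
        intervalIntegral.integral_const_mul, intervalIntegral.integral_const_mul]
      ring
    linarith [he ▸ h0]
  have hd := discrim_le_zero key
  rw [discrim] at hd
  nlinarith [hd]

-- derivative of the norm in a real inner product space
lemma hasDerivAt_norm' {E : Type*} [NormedAddCommGroup E] [InnerProductSpace ℝ E]
    {f : ℝ → E} {f' : E} {x : ℝ} (hf : HasDerivAt f f' x) (hx : f x ≠ 0) :
    HasDerivAt (fun t => ‖f t‖) (⟪f x, f'⟫ / ‖f x‖) x := by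
  have h1 : HasDerivAt (fun t => ⟪f t, f t⟫) (⟪f x, f'⟫ + ⟪f', f x⟫) x := hf.inner ℝ hf
  have hfx : (⟪f x, f x⟫ : ℝ) ≠ 0 := by
    simpa [real_inner_self_eq_norm_mul_norm] using
      mul_ne_zero (norm_ne_zero_iff.mpr hx) (norm_ne_zero_iff.mpr hx)
  have h2 := h1.sqrt hfx
  have heq : (fun t => Real.sqrt ⟪f t, f t⟫) = fun t => ‖f t‖ := by
    funext t
    rw [real_inner_self_eq_norm_mul_norm, Real.sqrt_mul_self (norm_nonneg _)]
  have hval : (⟪f x, f'⟫ + ⟪f', f x⟫) / (2 * Real.sqrt ⟪f x, f x⟫) = ⟪f x, f'⟫ / ‖f x‖ := by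
    rw [real_inner_self_eq_norm_mul_norm, Real.sqrt_mul_self (norm_nonneg _),
      real_inner_comm (f') (f x)]
    ring
  rw [heq, hval] at h2
  exact h2

set_option maxHeartbeats 2000000 in
theorem stmt10 (n : ℕ) (C Cθ Cv HT : ℝ → ℝ → EuclideanSpace ℝ (Fin n))
    -- `C` is a C² homotopy of closed curves with partial derivatives `Cθ`, `Cv` …
    (hC2 : ContDiff ℝ 2 fun p : ℝ × ℝ => C p.1 p.2)
    (hper : ∀ θ v, C (θ + 2 * Real.pi) v = C θ v)
    (hCθ : ∀ θ v, HasDerivAt (fun t => C t v) (Cθ θ v) θ)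
    (hCv : ∀ θ v, HasDerivAt (fun t => C θ t) (Cv θ v) v)
    -- … immersed at every point …
    (hne : ∀ θ v, Cθ θ v ≠ 0)
    -- … and `HT = ∂_θ T` is the derivative of the unit tangent `T = Cθ/|Cθ|`
    -- (so `H = |Cθ|⁻¹ • HT` is the mean curvature):
    (hHT : ∀ θ v, HasDerivAt (fun t => ‖Cθ t v‖⁻¹ • Cθ t v) (HT θ v) θ) :
    -- then `|√(len(C)(v″)) − √(len(C)(v′))| ≤ (√J(C)/2)·√(v″ − v′)`:
    ∀ v' ∈ Set.Icc (0:ℝ) 1, ∀ v'' ∈ Set.Icc (0:ℝ) 1, v' < v'' →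
      |Real.sqrt (∫ θ in (0:ℝ)..(2 * Real.pi), ‖Cθ θ v''‖)
        - Real.sqrt (∫ θ in (0:ℝ)..(2 * Real.pi), ‖Cθ θ v'‖)|
      ≤ Real.sqrt (∫ v in (0:ℝ)..1, ∫ θ in (0:ℝ)..(2 * Real.pi),
            ‖(‖Cθ θ v‖⁻¹) • HT θ v‖ ^ 2 * ‖projN (Cθ θ v) (Cv θ v)‖ ^ 2 * ‖Cθ θ v‖) / 2
          * Real.sqrt (v'' - v') := by
  set F : ℝ × ℝ → EuclideanSpace ℝ (Fin n) := fun p => C p.1 p.2 with hF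
  have hFd : Differentiable ℝ F := hC2.differentiable (by norm_num)
  -- the horizontal/vertical lines
  have hlineθ : ∀ (v θ : ℝ), HasDerivAt (fun t : ℝ => ((t, v) : ℝ × ℝ)) (1, 0) θ :=
    fun v θ => (hasDerivAt_id θ).prodMk (hasDerivAt_const θ v)
  have hlinev : ∀ (θ v : ℝ), HasDerivAt (fun t : ℝ => ((θ, t) : ℝ × ℝ)) (0, 1) v :=
    fun θ v => (hasDerivAt_const v θ).prodMk (hasDerivAt_id v)
  -- identify Cθ and Cv with fderiv applications
  have hCθ_eq : ∀ θ v, Cθ θ v = fderiv ℝ F (θ, v) (1, 0) := by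
    intro θ v
    have h0 := (hFd (θ, v)).hasFDerivAt.comp_hasDerivAt θ (hlineθ v θ)
    have h : HasDerivAt (fun t => C t v) (fderiv ℝ F (θ, v) (1, 0)) θ := h0
    exact (hCθ θ v).unique h
  have hCv_eq : ∀ θ v, Cv θ v = fderiv ℝ F (θ, v) (0, 1) := by
    intro θ v
    exact (hCv θ v).unique ((hFd (θ, v)).hasFDerivAt.comp_hasDerivAt v (hlinev θ v))
  have contF' : Continuous (fderiv ℝ F) := hC2.continuous_fderiv (by norm_num)
  have contCθ : Continuous (fun p : ℝ × ℝ => Cθ p.1 p.2) := by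
    have : (fun p : ℝ × ℝ => Cθ p.1 p.2) = fun p => fderiv ℝ F p ((1:ℝ), (0:ℝ)) :=
      funext fun p => hCθ_eq p.1 p.2
    rw [this]; exact contF'.clm_apply continuous_const
  have contCv : Continuous (fun p : ℝ × ℝ => Cv p.1 p.2) := by
    have : (fun p : ℝ × ℝ => Cv p.1 p.2) = fun p => fderiv ℝ F p ((0:ℝ), (1:ℝ)) :=
      funext fun p => hCv_eq p.1 p.2
    rw [this]; exact contF'.clm_apply continuous_const
  -- second derivative
  have hF'c1 : ContDiff ℝ 1 (fderiv ℝ F) := hC2.fderiv_right (by norm_num)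
  have hF'd : Differentiable ℝ (fderiv ℝ F) := hF'c1.differentiable (by norm_num)
  have contF'' : Continuous (fderiv ℝ (fderiv ℝ F)) := hF'c1.continuous_fderiv (by norm_num)
  set Cvθ : ℝ → ℝ → EuclideanSpace ℝ (Fin n) :=
    fun θ v => fderiv ℝ (fderiv ℝ F) (θ, v) (0, 1) (1, 0) with hCvθdef
  set Cθθ : ℝ → ℝ → EuclideanSpace ℝ (Fin n) :=
    fun θ v => fderiv ℝ (fderiv ℝ F) (θ, v) (1, 0) (1, 0) with hCθθdef
  have contCvθ : Continuous (fun p : ℝ × ℝ => Cvθ p.1 p.2) :=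
    (contF''.clm_apply continuous_const).clm_apply continuous_const
  have contCθθ : Continuous (fun p : ℝ × ℝ => Cθθ p.1 p.2) :=
    (contF''.clm_apply continuous_const).clm_apply continuous_const
  -- ∂ᵥ Cθ = Cvθ
  have hCθv : ∀ θ v, HasDerivAt (fun t => Cθ θ t) (Cvθ θ v) v := by
    intro θ v
    have s1 : HasDerivAt (fun t => fderiv ℝ F (θ, t)) (fderiv ℝ (fderiv ℝ F) (θ, v) (0, 1)) v :=
      (hF'd (θ, v)).hasFDerivAt.comp_hasDerivAt v (hlinev θ v)
    have s2 : HasDerivAt (fun t => fderiv ℝ F (θ, t) ((1:ℝ), (0:ℝ))) (Cvθ θ v) v := by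
      simpa using s1.clm_apply (hasDerivAt_const v ((1:ℝ), (0:ℝ)))
    exact s2.congr_of_eventuallyEq (Filter.Eventually.of_forall fun t => (hCθ_eq θ t))
  -- ∂θ Cv = Cvθ  (using symmetry of second derivatives)
  have hsymm : ∀ θ v, fderiv ℝ (fderiv ℝ F) (θ, v) ((1:ℝ), (0:ℝ)) ((0:ℝ), (1:ℝ)) = Cvθ θ v := by
    intro θ v
    exact ((hC2.contDiffAt.isSymmSndFDerivAt (by simp [minSmoothness_of_isRCLikeNormedField])) _ _)
  have hCvθ' : ∀ θ v, HasDerivAt (fun t => Cv t v) (Cvθ θ v) θ := by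
    intro θ v
    have s1 : HasDerivAt (fun t => fderiv ℝ F (t, v)) (fderiv ℝ (fderiv ℝ F) (θ, v) (1, 0)) θ :=
      (hF'd (θ, v)).hasFDerivAt.comp_hasDerivAt θ (hlineθ v θ)
    have s2 : HasDerivAt (fun t => fderiv ℝ F (t, v) ((0:ℝ), (1:ℝ)))
        (fderiv ℝ (fderiv ℝ F) (θ, v) (1, 0) (0, 1)) θ := by
      simpa using s1.clm_apply (hasDerivAt_const θ ((0:ℝ), (1:ℝ)))
    rw [hsymm θ v] at s2
    exact s2.congr_of_eventuallyEq (Filter.Eventually.of_forall fun t => (hCv_eq t v))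
  -- ∂θ Cθ = Cθθ
  have hCθθ' : ∀ θ v, HasDerivAt (fun t => Cθ t v) (Cθθ θ v) θ := by
    intro θ v
    have s1 : HasDerivAt (fun t => fderiv ℝ F (t, v)) (fderiv ℝ (fderiv ℝ F) (θ, v) (1, 0)) θ :=
      (hF'd (θ, v)).hasFDerivAt.comp_hasDerivAt θ (hlineθ v θ)
    have s2 : HasDerivAt (fun t => fderiv ℝ F (t, v) ((1:ℝ), (0:ℝ))) (Cθθ θ v) θ := by
      simpa using s1.clm_apply (hasDerivAt_const θ ((1:ℝ), (0:ℝ)))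
    exact s2.congr_of_eventuallyEq (Filter.Eventually.of_forall fun t => (hCθ_eq t v))
  -- periodicity of Cθ and Cv
  have hperθ : ∀ θ v, Cθ (θ + 2 * Real.pi) v = Cθ θ v := by
    intro θ v
    have hadd : HasDerivAt (fun t : ℝ => t + 2 * Real.pi) 1 θ := by
      simpa using (hasDerivAt_id θ).add_const (2 * Real.pi)
    have h1 : HasDerivAt (fun t => C (t + 2 * Real.pi) v) (Cθ (θ + 2 * Real.pi) v) θ := by
      have := HasDerivAt.scomp (x := θ) (h := fun t : ℝ => t + 2 * Real.pi) (hCθ (θ + 2 * Real.pi) v) hadd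
      rw [one_smul] at this
      exact this
    have h2 : HasDerivAt (fun t => C t v) (Cθ (θ + 2 * Real.pi) v) θ :=
      h1.congr_of_eventuallyEq (Filter.Eventually.of_forall fun t => (hper t v).symm)
    exact (h2.unique (hCθ θ v))
  have hperv : ∀ θ v, Cv (θ + 2 * Real.pi) v = Cv θ v := by
    intro θ v
    have h1 : HasDerivAt (fun t => C θ t) (Cv (θ + 2 * Real.pi) v) v :=
      (hCv (θ + 2 * Real.pi) v).congr_of_eventuallyEq
        (Filter.Eventually.of_forall fun t => (hper θ t).symm)
    exact h1.unique (hCv θ v)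
  -- norms are nonzero
  have hnz : ∀ θ v, ‖Cθ θ v‖ ≠ 0 := fun θ v => norm_ne_zero_iff.mpr (hne θ v)
  -- explicit formula for HT
  have hTform : ∀ θ v, HasDerivAt (fun t => ‖Cθ t v‖⁻¹ • Cθ t v)
      (‖Cθ θ v‖⁻¹ • Cθθ θ v +
        (-(⟪Cθ θ v, Cθθ θ v⟫ / ‖Cθ θ v‖) / ‖Cθ θ v‖ ^ 2) • Cθ θ v) θ := by
    intro θ v
    exact ((hasDerivAt_norm' (hCθθ' θ v) (hne θ v)).inv (hnz θ v)).smul (hCθθ' θ v)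
  have hHT_eq : ∀ θ v, HT θ v = ‖Cθ θ v‖⁻¹ • Cθθ θ v +
      (-(⟪Cθ θ v, Cθθ θ v⟫ / ‖Cθ θ v‖) / ‖Cθ θ v‖ ^ 2) • Cθ θ v :=
    fun θ v => (hHT θ v).unique (hTform θ v)
  have contHT : Continuous (fun p : ℝ × ℝ => HT p.1 p.2) := by
    have : (fun p : ℝ × ℝ => HT p.1 p.2) = fun p : ℝ × ℝ =>
        ‖Cθ p.1 p.2‖⁻¹ • Cθθ p.1 p.2 +
          (-(⟪Cθ p.1 p.2, Cθθ p.1 p.2⟫ / ‖Cθ p.1 p.2‖) / ‖Cθ p.1 p.2‖ ^ 2) • Cθ p.1 p.2 :=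
      funext fun p => hHT_eq p.1 p.2
    rw [this]
    have hn : Continuous (fun p : ℝ × ℝ => ‖Cθ p.1 p.2‖) := contCθ.norm
    have hninv : Continuous (fun p : ℝ × ℝ => ‖Cθ p.1 p.2‖⁻¹) :=
      hn.inv₀ (fun p => hnz p.1 p.2)
    exact (hninv.smul contCθθ).add
      ((((((contCθ.inner contCθθ)).div hn (fun p => hnz p.1 p.2)).neg).div
        (hn.pow 2) (fun p => pow_ne_zero 2 (hnz p.1 p.2))).smul contCθ)
  -- T and its continuity
  have contT : Continuous (fun p : ℝ × ℝ => ‖Cθ p.1 p.2‖⁻¹ • Cθ p.1 p.2) :=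
    (contCθ.norm.inv₀ (fun p => hnz p.1 p.2)).smul contCθ
  have hTnorm : ∀ θ v, ‖(‖Cθ θ v‖⁻¹ • Cθ θ v)‖ = 1 := by
    intro θ v
    rw [norm_smul, norm_inv, norm_norm, inv_mul_cancel₀ (hnz θ v)]
  -- orthogonality of HT and T
  have hHT_T : ∀ θ v, ⟪HT θ v, ‖Cθ θ v‖⁻¹ • Cθ θ v⟫ = 0 := by
    intro θ v
    have h1 : HasDerivAt (fun t => ⟪(‖Cθ t v‖⁻¹ • Cθ t v), (‖Cθ t v‖⁻¹ • Cθ t v)⟫)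
        (⟪(‖Cθ θ v‖⁻¹ • Cθ θ v), HT θ v⟫ + ⟪HT θ v, (‖Cθ θ v‖⁻¹ • Cθ θ v)⟫) θ :=
      (hHT θ v).inner ℝ (hHT θ v)
    have h2 : HasDerivAt (fun t => ⟪(‖Cθ t v‖⁻¹ • Cθ t v), (‖Cθ t v‖⁻¹ • Cθ t v)⟫) 0 θ := by
      have : (fun t => ⟪(‖Cθ t v‖⁻¹ • Cθ t v), (‖Cθ t v‖⁻¹ • Cθ t v)⟫) = fun _ : ℝ => (1:ℝ) := by
        funext t
        rw [real_inner_self_eq_norm_mul_norm, hTnorm t v]; norm_num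
      rw [this]; exact hasDerivAt_const θ 1
    have h3 := h1.unique h2
    rw [real_inner_comm] at h3
    linarith
  -- the v-derivative of the norm
  set D : ℝ → ℝ → ℝ := fun θ v => ⟪Cθ θ v, Cvθ θ v⟫ / ‖Cθ θ v‖ with hDdef
  have hnormv : ∀ θ x, HasDerivAt (fun t => ‖Cθ θ t‖) (D θ x) x :=
    fun θ x => hasDerivAt_norm' (hCθv θ x) (hne θ x)
  have contD : Continuous (fun p : ℝ × ℝ => D p.1 p.2) :=
    (contCθ.inner contCvθ).div contCθ.norm (fun p => hnz p.1 p.2)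
  have twopi_pos : (0:ℝ) < 2 * Real.pi := Real.two_pi_pos
  -- length and its derivative
  set L : ℝ → ℝ := fun v => ∫ θ in (0:ℝ)..(2 * Real.pi), ‖Cθ θ v‖ with hLdef
  set Lder : ℝ → ℝ := fun v => ∫ θ in (0:ℝ)..(2 * Real.pi), D θ v with hLderdef
  have sliceCont : ∀ {β : Type} [TopologicalSpace β] (f : ℝ → ℝ → β),
      Continuous (fun p : ℝ × ℝ => f p.1 p.2) → ∀ v : ℝ, Continuous (fun θ => f θ v) := by
    intro β _ f hf v
    exact hf.comp (continuous_id.prodMk continuous_const)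
  have hLd : ∀ x₀ : ℝ, HasDerivAt L (Lder x₀) x₀ := by
    intro x₀
    obtain ⟨M, hM⟩ := (isCompact_Icc.prod isCompact_Icc).exists_bound_of_continuousOn
      (s := Icc (0:ℝ) (2 * Real.pi) ×ˢ Icc (x₀ - 1) (x₀ + 1)) contD.continuousOn
    have main := intervalIntegral.hasDerivAt_integral_of_dominated_loc_of_deriv_le
      (F := fun x θ => ‖Cθ θ x‖) (F' := fun x θ => D θ x) (x₀ := x₀)
      (a := (0:ℝ)) (b := 2 * Real.pi) (μ := volume) (bound := fun _ => M)
      (s := Metric.ball x₀ 1) (Metric.ball_mem_nhds x₀ one_pos)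
      (Filter.Eventually.of_forall fun x =>
        ((sliceCont (fun θ v => Cθ θ v) contCθ x).norm).aestronglyMeasurable)
      (((sliceCont (fun θ v => Cθ θ v) contCθ x₀).norm).intervalIntegrable _ _)
      ((sliceCont D contD x₀).aestronglyMeasurable)
      ?_ intervalIntegrable_const
      (Filter.Eventually.of_forall fun θ _ x _ => hnormv θ x)
    · exact main.2
    · refine Filter.Eventually.of_forall fun θ hθ x hx => ?_
      have hθ' : θ ∈ Icc (0:ℝ) (2 * Real.pi) := by
        rw [Set.uIoc_of_le twopi_pos.le] at hθ
        exact Set.Ioc_subset_Icc_self hθ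
      have hx' : x ∈ Icc (x₀ - 1) (x₀ + 1) := by
        rw [Real.ball_eq_Ioo] at hx
        exact Set.Ioo_subset_Icc_self hx
      exact hM (θ, x) ⟨hθ', hx'⟩
  have contL : Continuous L := by
    refine intervalIntegral.continuous_parametric_intervalIntegral_of_continuous'
      (μ := volume) (f := fun v θ => ‖Cθ θ v‖) ?_ 0 (2 * Real.pi)
    exact (contCθ.comp continuous_swap).norm
  have contLder : Continuous Lder := by
    refine intervalIntegral.continuous_parametric_intervalIntegral_of_continuous'
      (μ := volume) (f := fun v θ => D θ v) ?_ 0 (2 * Real.pi)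
    exact contD.comp continuous_swap
  have Lpos : ∀ v, 0 < L v := by
    intro v
    refine intervalIntegral_pos_of_pos_on
      (((sliceCont (fun θ v => Cθ θ v) contCθ v).norm).intervalIntegrable _ _)
      (fun θ _ => norm_pos_iff.mpr (hne θ v)) twopi_pos
  -- integration by parts
  have IBP : ∀ v, Lder v = - ∫ θ in (0:ℝ)..(2 * Real.pi), ⟪HT θ v, Cv θ v⟫ := by
    intro v
    have contTs := sliceCont (fun θ v => ‖Cθ θ v‖⁻¹ • Cθ θ v) contT v
    have contCvs := sliceCont (fun θ v => Cv θ v) contCv v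
    have contCvθs := sliceCont (fun θ v => Cvθ θ v) contCvθ v
    have contHTs := sliceCont (fun θ v => HT θ v) contHT v
    have hder : ∀ θ : ℝ, HasDerivAt (fun t => ⟪(‖Cθ t v‖⁻¹ • Cθ t v), Cv t v⟫)
        (⟪(‖Cθ θ v‖⁻¹ • Cθ θ v), Cvθ θ v⟫ + ⟪HT θ v, Cv θ v⟫) θ :=
      fun θ => (hHT θ v).inner ℝ (hCvθ' θ v)
    have i1 : IntervalIntegrable (fun θ => ⟪(‖Cθ θ v‖⁻¹ • Cθ θ v), Cvθ θ v⟫) volume 0 (2 * Real.pi) :=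
      (contTs.inner contCvθs).intervalIntegrable _ _
    have i2 : IntervalIntegrable (fun θ => ⟪HT θ v, Cv θ v⟫) volume 0 (2 * Real.pi) :=
      (contHTs.inner contCvs).intervalIntegrable _ _
    have hFTC := intervalIntegral.integral_eq_sub_of_hasDerivAt (a := (0:ℝ)) (b := 2 * Real.pi) (fun θ _ => hder θ)
      ((contTs.inner contCvθs).add (contHTs.inner contCvs) |>.intervalIntegrable _ _)
    have hb : ⟪(‖Cθ (2 * Real.pi) v‖⁻¹ • Cθ (2 * Real.pi) v), Cv (2 * Real.pi) v⟫
        = ⟪(‖Cθ 0 v‖⁻¹ • Cθ 0 v), Cv 0 v⟫ := by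
      rw [show (2 * Real.pi : ℝ) = 0 + 2 * Real.pi by ring, hperθ, hperv]
    rw [intervalIntegral.integral_add i1 i2, hb, sub_self] at hFTC
    have hDeq : Lder v = ∫ θ in (0:ℝ)..(2 * Real.pi), ⟪(‖Cθ θ v‖⁻¹ • Cθ θ v), Cvθ θ v⟫ := by
      refine intervalIntegral.integral_congr fun θ _ => ?_
      rw [real_inner_smul_left, hDdef]
      simp [div_eq_inv_mul]
    rw [hDeq]
    linarith [hFTC]
  -- the normal projection
  set P : ℝ → ℝ → EuclideanSpace ℝ (Fin n) := fun θ v => projN (Cθ θ v) (Cv θ v) with hPdef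
  have contP : Continuous (fun p : ℝ × ℝ => P p.1 p.2) := by
    have : (fun p : ℝ × ℝ => P p.1 p.2) = fun p : ℝ × ℝ => Cv p.1 p.2 -
        ⟪Cv p.1 p.2, ‖Cθ p.1 p.2‖⁻¹ • Cθ p.1 p.2⟫ • (‖Cθ p.1 p.2‖⁻¹ • Cθ p.1 p.2) := rfl
    rw [this]
    exact contCv.sub ((contCv.inner (𝕜 := ℝ) contT).smul contT)
  have hip : ∀ θ v, ⟪HT θ v, Cv θ v⟫ = ⟪HT θ v, P θ v⟫ := by
    intro θ v
    have : ⟪HT θ v, P θ v⟫ = ⟪HT θ v, Cv θ v⟫ := by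
      show ⟪HT θ v, Cv θ v - ⟪Cv θ v, ‖Cθ θ v‖⁻¹ • Cθ θ v⟫ • (‖Cθ θ v‖⁻¹ • Cθ θ v)⟫ = _
      rw [inner_sub_right, real_inner_smul_right, hHT_T, mul_zero, sub_zero]
    exact this.symm
  -- the energy integrand and its integral
  set gint : ℝ → ℝ := fun v => ∫ θ in (0:ℝ)..(2 * Real.pi),
      ‖(‖Cθ θ v‖⁻¹) • HT θ v‖ ^ 2 * ‖projN (Cθ θ v) (Cv θ v)‖ ^ 2 * ‖Cθ θ v‖ with hgdef
  have contH2 : Continuous (fun p : ℝ × ℝ =>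
      ‖(‖Cθ p.1 p.2‖⁻¹) • HT p.1 p.2‖ ^ 2 * ‖projN (Cθ p.1 p.2) (Cv p.1 p.2)‖ ^ 2
        * ‖Cθ p.1 p.2‖) :=
    ((((contCθ.norm.inv₀ fun p => hnz p.1 p.2).smul contHT).norm.pow 2).mul
      (contP.norm.pow 2)).mul contCθ.norm
  have paramCont : ∀ f : ℝ → ℝ → ℝ, Continuous (fun p : ℝ × ℝ => f p.1 p.2) →
      Continuous (fun v => ∫ θ in (0:ℝ)..(2 * Real.pi), f θ v) := by
    intro f hf
    exact intervalIntegral.continuous_parametric_intervalIntegral_of_continuous'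
      (μ := volume) (f := fun v θ => f θ v) (hf.comp continuous_swap) 0 (2 * Real.pi)
  have contgint : Continuous gint := paramCont
    (fun θ v => ‖(‖Cθ θ v‖⁻¹) • HT θ v‖ ^ 2 * ‖projN (Cθ θ v) (Cv θ v)‖ ^ 2 * ‖Cθ θ v‖) contH2
  have gint_nonneg : ∀ v, 0 ≤ gint v := by
    intro v
    refine intervalIntegral.integral_nonneg twopi_pos.le (fun θ _ => ?_)
    have : (0:ℝ) ≤ ‖(‖Cθ θ v‖⁻¹) • HT θ v‖ ^ 2 * ‖projN (Cθ θ v) (Cv θ v)‖ ^ 2 * ‖Cθ θ v‖ := by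
      positivity
    exact this
  -- the key pointwise-in-v bound on Lder
  have key1 : ∀ v, |Lder v| ≤ Real.sqrt (gint v) * Real.sqrt (L v) := by
    intro v
    set f1 : ℝ → ℝ := fun θ => ‖(‖Cθ θ v‖⁻¹) • HT θ v‖ * ‖P θ v‖ * Real.sqrt ‖Cθ θ v‖ with hf1
    set f2 : ℝ → ℝ := fun θ => Real.sqrt ‖Cθ θ v‖ with hf2
    have contf1 : Continuous f1 :=
      ((sliceCont (fun θ v => ‖(‖Cθ θ v‖⁻¹) • HT θ v‖)
          ((contCθ.norm.inv₀ fun p => hnz p.1 p.2).smul contHT).norm v).mul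
        (sliceCont (fun θ v => ‖P θ v‖) contP.norm v)).mul
        (Real.continuous_sqrt.comp (sliceCont (fun θ v => ‖Cθ θ v‖) contCθ.norm v))
    have contf2 : Continuous f2 :=
      Real.continuous_sqrt.comp (sliceCont (fun θ v => ‖Cθ θ v‖) contCθ.norm v)
    have hprod : ∀ θ, f1 θ * f2 θ = ‖HT θ v‖ * ‖P θ v‖ := by
      intro θ
      have h1 : ‖(‖Cθ θ v‖⁻¹) • HT θ v‖ = ‖Cθ θ v‖⁻¹ * ‖HT θ v‖ := by
        rw [norm_smul, norm_inv, norm_norm]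
      have h2 : Real.sqrt ‖Cθ θ v‖ * Real.sqrt ‖Cθ θ v‖ = ‖Cθ θ v‖ :=
        Real.mul_self_sqrt (norm_nonneg _)
      calc f1 θ * f2 θ
          = (‖Cθ θ v‖⁻¹ * ‖HT θ v‖) * ‖P θ v‖ *
            (Real.sqrt ‖Cθ θ v‖ * Real.sqrt ‖Cθ θ v‖) := by rw [← h1]; ring
        _ = ‖HT θ v‖ * ‖P θ v‖ * (‖Cθ θ v‖⁻¹ * ‖Cθ θ v‖) := by rw [h2]; ring
        _ = ‖HT θ v‖ * ‖P θ v‖ := by rw [inv_mul_cancel₀ (hnz θ v), mul_one]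
    have habs : |Lder v| ≤ ∫ θ in (0:ℝ)..(2 * Real.pi), f1 θ * f2 θ := by
      rw [IBP v, abs_neg]
      have h4 : (∫ θ in (0:ℝ)..(2 * Real.pi), ⟪HT θ v, Cv θ v⟫)
          = ∫ θ in (0:ℝ)..(2 * Real.pi), ⟪HT θ v, P θ v⟫ :=
        intervalIntegral.integral_congr fun θ _ => hip θ v
      rw [h4]
      have contPs := sliceCont (fun θ v => P θ v) contP v
      have contHTs := sliceCont (fun θ v => HT θ v) contHT v
      calc |∫ θ in (0:ℝ)..(2 * Real.pi), ⟪HT θ v, P θ v⟫|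
          ≤ ∫ θ in (0:ℝ)..(2 * Real.pi), |⟪HT θ v, P θ v⟫| :=
            intervalIntegral.abs_integral_le_integral_abs twopi_pos.le
        _ ≤ ∫ θ in (0:ℝ)..(2 * Real.pi), f1 θ * f2 θ := by
            refine intervalIntegral.integral_mono_on twopi_pos.le
              ((contHTs.inner contPs).abs.intervalIntegrable _ _)
              ((contf1.mul contf2).intervalIntegrable _ _) (fun θ _ => ?_)
            rw [hprod θ]
            exact abs_real_inner_le_norm _ _
    have hcs := cs_integral contf1 contf2 twopi_pos.le
    have hf1sq : (∫ θ in (0:ℝ)..(2 * Real.pi), f1 θ ^ 2) = gint v := by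
      refine intervalIntegral.integral_congr fun θ _ => ?_
      have h2 : (Real.sqrt ‖Cθ θ v‖) ^ 2 = ‖Cθ θ v‖ := Real.sq_sqrt (norm_nonneg _)
      calc f1 θ ^ 2
          = ‖(‖Cθ θ v‖⁻¹) • HT θ v‖ ^ 2 * ‖P θ v‖ ^ 2 * (Real.sqrt ‖Cθ θ v‖) ^ 2 := by ring
        _ = ‖(‖Cθ θ v‖⁻¹) • HT θ v‖ ^ 2 * ‖projN (Cθ θ v) (Cv θ v)‖ ^ 2 * ‖Cθ θ v‖ := by
            rw [h2]
    have hf2sq : (∫ θ in (0:ℝ)..(2 * Real.pi), f2 θ ^ 2) = L v :=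
      intervalIntegral.integral_congr fun θ _ => Real.sq_sqrt (norm_nonneg _)
    have hS : 0 ≤ ∫ θ in (0:ℝ)..(2 * Real.pi), f1 θ * f2 θ :=
      intervalIntegral.integral_nonneg twopi_pos.le (fun θ _ => mul_nonneg
        (mul_nonneg (mul_nonneg (norm_nonneg _) (norm_nonneg _)) (Real.sqrt_nonneg _))
        (Real.sqrt_nonneg _))
    calc |Lder v| ≤ ∫ θ in (0:ℝ)..(2 * Real.pi), f1 θ * f2 θ := habs
      _ = Real.sqrt ((∫ θ in (0:ℝ)..(2 * Real.pi), f1 θ * f2 θ) ^ 2) := (Real.sqrt_sq hS).symm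
      _ ≤ Real.sqrt ((∫ θ in (0:ℝ)..(2 * Real.pi), f1 θ ^ 2)
            * (∫ θ in (0:ℝ)..(2 * Real.pi), f2 θ ^ 2)) := Real.sqrt_le_sqrt hcs
      _ = Real.sqrt (gint v * L v) := by rw [hf1sq, hf2sq]
      _ = Real.sqrt (gint v) * Real.sqrt (L v) := Real.sqrt_mul (gint_nonneg v) _
  -- final assembly
  intro v' hv' v'' hv'' hlt
  set φ : ℝ → ℝ := fun v => Real.sqrt (L v) with hφdef
  have hsqL : ∀ x : ℝ, 0 < Real.sqrt (L x) := fun x => Real.sqrt_pos.mpr (Lpos x)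
  have hφd : ∀ x : ℝ, HasDerivAt φ (Lder x / (2 * Real.sqrt (L x))) x :=
    fun x => (hLd x).sqrt (Lpos x).ne'
  have contφ' : Continuous fun x => Lder x / (2 * Real.sqrt (L x)) :=
    contLder.div (continuous_const.mul (Real.continuous_sqrt.comp contL))
      (fun x => (mul_pos two_pos (hsqL x)).ne')
  have hFTC2 : (∫ x in v'..v'', Lder x / (2 * Real.sqrt (L x))) = φ v'' - φ v' :=
    intervalIntegral.integral_eq_sub_of_hasDerivAt (a := v') (b := v'')
      (fun x _ => hφd x) (contφ'.intervalIntegrable _ _)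
  have hptw : ∀ x : ℝ, |Lder x / (2 * Real.sqrt (L x))| ≤ Real.sqrt (gint x) / 2 := by
    intro x
    rw [abs_div, abs_of_pos (mul_pos two_pos (hsqL x)),
      div_le_div_iff₀ (mul_pos two_pos (hsqL x)) two_pos]
    have h6 : |Lder x| * 2 ≤ (Real.sqrt (gint x) * Real.sqrt (L x)) * 2 := by
      have := key1 x; linarith
    calc |Lder x| * 2 ≤ (Real.sqrt (gint x) * Real.sqrt (L x)) * 2 := h6
      _ = Real.sqrt (gint x) * (2 * Real.sqrt (L x)) := by ring
  have step1 : |φ v'' - φ v'| ≤ ∫ x in v'..v'', Real.sqrt (gint x) / 2 := by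
    rw [← hFTC2]
    calc |∫ x in v'..v'', Lder x / (2 * Real.sqrt (L x))|
        ≤ ∫ x in v'..v'', |Lder x / (2 * Real.sqrt (L x))| :=
          intervalIntegral.abs_integral_le_integral_abs hlt.le
      _ ≤ ∫ x in v'..v'', Real.sqrt (gint x) / 2 :=
          intervalIntegral.integral_mono_on hlt.le (contφ'.abs.intervalIntegrable _ _)
            (((Real.continuous_sqrt.comp contgint).div_const 2).intervalIntegrable _ _)
            (fun x _ => hptw x)
  have hcs2 := cs_integral (f := fun x => Real.sqrt (gint x)) (g := fun _ => (1:ℝ))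
    (Real.continuous_sqrt.comp contgint) continuous_const hlt.le
  have hg1 : (∫ x in v'..v'', Real.sqrt (gint x) * 1) = ∫ x in v'..v'', Real.sqrt (gint x) :=
    intervalIntegral.integral_congr fun x _ => mul_one _
  have e1 : (∫ x in v'..v'', (Real.sqrt (gint x)) ^ 2) = ∫ x in v'..v'', gint x :=
    intervalIntegral.integral_congr fun x _ => Real.sq_sqrt (gint_nonneg x)
  have e2 : (∫ x in v'..v'', ((1:ℝ)) ^ 2) = v'' - v' := by simp
  have hmono : (∫ x in v'..v'', gint x) ≤ ∫ x in (0:ℝ)..1, gint x :=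
    intervalIntegral.integral_mono_interval hv'.1 hlt.le hv''.2
      (Filter.Eventually.of_forall fun x => gint_nonneg x) (contgint.intervalIntegrable _ _)
  have hJ0 : 0 ≤ ∫ x in (0:ℝ)..1, gint x :=
    intervalIntegral.integral_nonneg zero_le_one (fun x _ => gint_nonneg x)
  have hInt0 : 0 ≤ ∫ x in v'..v'', Real.sqrt (gint x) :=
    intervalIntegral.integral_nonneg hlt.le (fun x _ => Real.sqrt_nonneg _)
  have step2 : (∫ x in v'..v'', Real.sqrt (gint x))
      ≤ Real.sqrt (∫ x in (0:ℝ)..1, gint x) * Real.sqrt (v'' - v') := by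
    calc (∫ x in v'..v'', Real.sqrt (gint x))
        = Real.sqrt ((∫ x in v'..v'', Real.sqrt (gint x)) ^ 2) := (Real.sqrt_sq hInt0).symm
      _ ≤ Real.sqrt ((∫ x in v'..v'', gint x) * (v'' - v')) := by
          refine Real.sqrt_le_sqrt ?_
          rw [← hg1, ← e1, ← e2]
          exact hcs2
      _ ≤ Real.sqrt ((∫ x in (0:ℝ)..1, gint x) * (v'' - v')) := by
          refine Real.sqrt_le_sqrt (mul_le_mul_of_nonneg_right hmono (by linarith))
      _ = Real.sqrt (∫ x in (0:ℝ)..1, gint x) * Real.sqrt (v'' - v') := Real.sqrt_mul hJ0 _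
  have h5 : (∫ x in v'..v'', Real.sqrt (gint x) / 2)
      = (∫ x in v'..v'', Real.sqrt (gint x)) / 2 := by
    simpa using intervalIntegral.integral_div 2 (fun x => Real.sqrt (gint x))
  have final : |φ v'' - φ v'| ≤ Real.sqrt (∫ x in (0:ℝ)..1, gint x) / 2 * Real.sqrt (v'' - v') := by
    rw [h5] at step1
    have : Real.sqrt (∫ x in (0:ℝ)..1, gint x) / 2 * Real.sqrt (v'' - v')
        = (Real.sqrt (∫ x in (0:ℝ)..1, gint x) * Real.sqrt (v'' - v')) / 2 := by ring
    rw [this]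
    linarith
  exact final
end
end

section
/- Let M > 0 and let C : ℝ × [0,1] → ℝⁿ be a C² homotopy of closed curves with |∂_θC(θ,v)| = l(v) > 0 for all θ, v (so that l is C¹). Suppose ∫₀¹ ( ∫₀^{2π} |⟨H(θ,v), ∂_vC(θ,v)⟩| |∂_θC(θ,v)| dθ )² dv ≤ M, where H is the mean curvature of the curve C(·,v). Then there exists φ : [0,1] → ℝ of class C¹ such that the shifted reparameterization C̃(θ,v) = C(θ + φ(v), v) satisfies ∫₀¹∫₀^{2π} |π_T ∂_vC̃(θ,v)|² dθ dv ≤ 2πM. -/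
open MeasureTheory Set Filter intervalIntegral
open scoped Topology ENNReal RealInnerProductSpace

noncomputable section

/-- Projection of `h` onto the tangent line spanned by `W`
(with the convention `T = 0` when `W = 0`). -/
def projT {E : Type*} [NormedAddCommGroup E] [InnerProductSpace ℝ E] (W h : E) : E :=
  ⟪h, ‖W‖⁻¹ • W⟫ • (‖W‖⁻¹ • W)

theorem stmt13 (n : ℕ) (M : ℝ) (hM : 0 < M)
    (C Cθ Cv HT : ℝ → ℝ → EuclideanSpace ℝ (Fin n)) (l : ℝ → ℝ)
    -- `C` is a C² homotopy of closed curves with partial derivatives `Cθ`, `Cv` …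
    (hC2 : ContDiff ℝ 2 fun p : ℝ × ℝ => C p.1 p.2)
    (hper : ∀ θ v, C (θ + 2 * Real.pi) v = C θ v)
    (hCθ : ∀ θ v, HasDerivAt (fun t => C t v) (Cθ θ v) θ)
    (hCv : ∀ θ v, HasDerivAt (fun t => C θ t) (Cv θ v) v)
    -- … parameterized with `|∂_θC(θ,v)| = l(v) > 0` …
    (hl : ∀ θ v, ‖Cθ θ v‖ = l v)
    (hlpos : ∀ v, 0 < l v)
    -- … `HT = ∂_θT`, so `H = |Cθ|⁻¹ • HT` is the mean curvature …
    (hHT : ∀ θ v, HasDerivAt (fun t => ‖Cθ t v‖⁻¹ • Cθ t v) (HT θ v) θ)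
    -- … satisfying the curvature bound `∫₀¹ (∫₀^{2π} |⟨H, ∂_vC⟩| |∂_θC| dθ)² dv ≤ M`:
    (hbound : (∫ v in (0:ℝ)..1, (∫ θ in (0:ℝ)..(2 * Real.pi),
        |⟪(‖Cθ θ v‖⁻¹) • HT θ v, Cv θ v⟫| * ‖Cθ θ v‖) ^ 2) ≤ M) :
    -- then some C¹ shift reparameterization `C̃(θ,v) = C(θ + φ(v), v)` satisfies
    -- `∫₀¹∫₀^{2π} |π_T ∂_vC̃|² dθ dv ≤ 2πM`:
    ∃ φ : ℝ → ℝ, ContDiff ℝ 1 φ ∧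
      (∫ v in (0:ℝ)..1, ∫ θ in (0:ℝ)..(2 * Real.pi),
          ‖projT (Cθ (θ + φ v) v) (Cv (θ + φ v) v + deriv φ v • Cθ (θ + φ v) v)‖ ^ 2)
        ≤ 2 * Real.pi * M := by
  have hπ : (0:ℝ) < 2 * Real.pi := by positivity
  have hlne : ∀ v, l v ≠ 0 := fun v => (hlpos v).ne'
  set F : ℝ × ℝ → EuclideanSpace ℝ (Fin n) := fun p => C p.1 p.2 with hF
  have hFdiff : Differentiable ℝ F := hC2.differentiable (by norm_num)
  set D : ℝ × ℝ → (ℝ × ℝ →L[ℝ] EuclideanSpace ℝ (Fin n)) := fderiv ℝ F with hD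
  have hD1 : ContDiff ℝ 1 D := hC2.fderiv_right (by norm_num)
  have hDdiff : Differentiable ℝ D := hD1.differentiable (by norm_num)
  have hDcont : Continuous D := hD1.continuous
  have hD2cont : Continuous (fderiv ℝ D) := hD1.continuous_fderiv (by norm_num)
  -- lines
  have hline1 : ∀ θ v : ℝ, HasDerivAt (fun t : ℝ => (t, v)) ((1:ℝ), (0:ℝ)) θ :=
    fun θ v => (hasDerivAt_id θ).prodMk (hasDerivAt_const θ v)
  have hline2 : ∀ θ v : ℝ, HasDerivAt (fun t : ℝ => (θ, t)) ((0:ℝ), (1:ℝ)) v :=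
    fun θ v => (hasDerivAt_const v θ).prodMk (hasDerivAt_id v)
  -- identification of partial derivatives
  have hCθD : ∀ θ v, Cθ θ v = D (θ, v) (1, 0) := by
    intro θ v
    have h1 : HasDerivAt (fun t => F (t, v)) (D (θ, v) (1, 0)) θ :=
      by have := (hFdiff (θ, v)).hasFDerivAt.comp_hasDerivAt θ (hline1 θ v); exact this
    exact (hCθ θ v).unique h1
  have hCvD : ∀ θ v, Cv θ v = D (θ, v) (0, 1) := by
    intro θ v
    have h1 : HasDerivAt (fun t => F (θ, t)) (D (θ, v) (0, 1)) v :=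
      (hFdiff (θ, v)).hasFDerivAt.comp_hasDerivAt v (hline2 θ v)
    exact (hCv θ v).unique h1
  have hCθcont : Continuous fun p : ℝ × ℝ => Cθ p.1 p.2 := by
    have : (fun p : ℝ × ℝ => Cθ p.1 p.2) = fun p => D p (1, 0) :=
      funext fun p => hCθD p.1 p.2
    rw [this]; exact hDcont.clm_apply continuous_const
  have hCvcont : Continuous fun p : ℝ × ℝ => Cv p.1 p.2 := by
    have : (fun p : ℝ × ℝ => Cv p.1 p.2) = fun p => D p (0, 1) :=
      funext fun p => hCvD p.1 p.2
    rw [this]; exact hDcont.clm_apply continuous_const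
  have hlcont : Continuous l := by
    have : l = fun v => ‖Cθ 0 v‖ := funext fun v => (hl 0 v).symm
    rw [this]
    exact (hCθcont.comp (continuous_const.prodMk continuous_id)).norm
  -- second derivatives
  have hDθ : ∀ θ v, HasDerivAt (fun t => D (t, v)) (fderiv ℝ D (θ, v) (1, 0)) θ :=
    fun θ v => (hDdiff (θ, v)).hasFDerivAt.comp_hasDerivAt θ (hline1 θ v)
  have hDv : ∀ θ v, HasDerivAt (fun s => D (θ, s)) (fderiv ℝ D (θ, v) (0, 1)) v :=
    fun θ v => (hDdiff (θ, v)).hasFDerivAt.comp_hasDerivAt v (hline2 θ v)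
  have hCvθ : ∀ θ v, HasDerivAt (fun t => Cv t v) ((fderiv ℝ D (θ, v)) (1, 0) (0, 1)) θ := by
    intro θ v
    have h1 := (hDθ θ v).clm_apply (hasDerivAt_const θ ((0:ℝ), (1:ℝ)))
    rw [show (fun t => Cv t v) = fun t => D (t, v) (0, 1) from funext fun t => hCvD t v]
    simpa using h1
  have hCθθ : ∀ θ v, HasDerivAt (fun t => Cθ t v) ((fderiv ℝ D (θ, v)) (1, 0) (1, 0)) θ := by
    intro θ v
    have h1 := (hDθ θ v).clm_apply (hasDerivAt_const θ ((1:ℝ), (0:ℝ)))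
    rw [show (fun t => Cθ t v) = fun t => D (t, v) (1, 0) from funext fun t => hCθD t v]
    simpa using h1
  have hCθv : ∀ θ v, HasDerivAt (fun s => Cθ θ s) ((fderiv ℝ D (θ, v)) (0, 1) (1, 0)) v := by
    intro θ v
    have h1 := (hDv θ v).clm_apply (hasDerivAt_const v ((1:ℝ), (0:ℝ)))
    rw [show (fun s => Cθ θ s) = fun s => D (θ, s) (1, 0) from funext fun s => hCθD θ s]
    simpa using h1
  have hsymm : ∀ θ v, (fderiv ℝ D (θ, v)) (1, 0) (0, 1) = (fderiv ℝ D (θ, v)) (0, 1) (1, 0) :=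
    fun θ v => second_derivative_symmetric (fun y => (hFdiff y).hasFDerivAt)
      ((hDdiff (θ, v)).hasFDerivAt) _ _
  -- the quantity m v = ⟪∂ᵥCθ, Cθ⟫ is independent of θ
  set m : ℝ → ℝ := fun v => ⟪(fderiv ℝ D (0, v)) (0, 1) (1, 0), Cθ 0 v⟫ with hm_def
  have hm : ∀ θ v, ⟪(fderiv ℝ D (θ, v)) (0, 1) (1, 0), Cθ θ v⟫ = m v := by
    intro θ v
    have e1 := (hCθv θ v).inner ℝ (hCθv θ v)
    have e2 := (hCθv 0 v).inner ℝ (hCθv 0 v)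
    have efun : (fun s => ⟪Cθ θ s, Cθ θ s⟫) = fun s => ⟪Cθ 0 s, Cθ 0 s⟫ := by
      funext s
      rw [real_inner_self_eq_norm_sq, real_inner_self_eq_norm_sq, hl, hl]
    rw [efun] at e1
    have heq := e1.unique e2
    have ha := real_inner_comm (Cθ θ v) ((fderiv ℝ D (θ, v)) (0, 1) (1, 0))
    have hb := real_inner_comm (Cθ 0 v) ((fderiv ℝ D (0, v)) (0, 1) (1, 0))
    simp only [hm_def]
    linarith [heq, ha, hb]
  -- tangent and its derivative
  set T : ℝ → ℝ → EuclideanSpace ℝ (Fin n) := fun θ v => (l v)⁻¹ • Cθ θ v with hT_def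
  have hTeq : ∀ θ v, ‖Cθ θ v‖⁻¹ • Cθ θ v = T θ v := by intro θ v; rw [hl]
  have hHT' : ∀ θ v, HasDerivAt (fun t => T t v) (HT θ v) θ := by
    intro θ v
    have h := hHT θ v
    rwa [show (fun t => ‖Cθ t v‖⁻¹ • Cθ t v) = fun t => T t v from funext fun t => hTeq t v] at h
  have hHTeq : ∀ θ v, HT θ v = (l v)⁻¹ • ((fderiv ℝ D (θ, v)) (1, 0) (1, 0)) := by
    intro θ v
    exact (hHT' θ v).unique ((hCθθ θ v).const_smul ((l v)⁻¹))
  have hHTcont : Continuous fun p : ℝ × ℝ => HT p.1 p.2 := by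
    have : (fun p : ℝ × ℝ => HT p.1 p.2)
        = fun p : ℝ × ℝ => (l p.2)⁻¹ • ((fderiv ℝ D p) (1, 0) (1, 0)) := by
      funext p; exact hHTeq p.1 p.2
    rw [this]
    exact ((hlcont.comp continuous_snd).inv₀ fun p => hlne p.2).smul
      ((hD2cont.clm_apply continuous_const).clm_apply continuous_const)
  have hTcont : Continuous fun p : ℝ × ℝ => T p.1 p.2 :=
    ((hlcont.comp continuous_snd).inv₀ fun p => hlne p.2).smul hCθcont
  -- the tangential speed f
  set f : ℝ → ℝ → ℝ := fun θ v => ⟪Cv θ v, T θ v⟫ with hf_def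
  have hfcont : Continuous fun p : ℝ × ℝ => f p.1 p.2 := hCvcont.inner hTcont
  set c : ℝ → ℝ := fun v => (l v)⁻¹ * m v with hc_def
  have hf' : ∀ θ v, HasDerivAt (fun t => f t v) (c v + ⟪Cv θ v, HT θ v⟫) θ := by
    intro θ v
    have h1 := (hCvθ θ v).inner ℝ (hHT' θ v)
    have h2 : ⟪(fderiv ℝ D (θ, v)) (1, 0) (0, 1), T θ v⟫ = c v := by
      rw [hT_def]
      simp only [real_inner_smul_right]
      rw [hsymm θ v, hm θ v]
    rw [show c v + ⟪Cv θ v, HT θ v⟫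
        = ⟪Cv θ v, HT θ v⟫ + ⟪(fderiv ℝ D (θ, v)) (1, 0) (0, 1), T θ v⟫ by
      rw [h2]; ring]
    exact h1
  -- periodicity
  have hCθper : ∀ θ v, Cθ (θ + 2 * Real.pi) v = Cθ θ v := by
    intro θ v
    have h1 : HasDerivAt (fun t : ℝ => C (t + 2 * Real.pi) v)
        ((1:ℝ) • Cθ (θ + 2 * Real.pi) v) θ :=
      by have := (hCθ (θ + 2 * Real.pi) v).scomp θ ((hasDerivAt_id' (x := θ)).add_const (2 * Real.pi)); exact this
    rw [show (fun t : ℝ => C (t + 2 * Real.pi) v) = fun t => C t v from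
      funext fun t => hper t v] at h1
    have := h1.unique (hCθ θ v)
    simpa using this
  have hCvper : ∀ θ v, Cv (θ + 2 * Real.pi) v = Cv θ v := by
    intro θ v
    have h1 := hCv (θ + 2 * Real.pi) v
    rw [show (fun t => C (θ + 2 * Real.pi) t) = fun t => C θ t from
      funext fun t => hper θ t] at h1
    exact h1.unique (hCv θ v)
  have hfper : ∀ θ v, f (θ + 2 * Real.pi) v = f θ v := by
    intro θ v
    simp only [hf_def, hT_def, hCθper, hCvper]
  -- the curvature integral g
  set gg : ℝ → ℝ := fun v => ∫ θ in (0:ℝ)..(2 * Real.pi), |⟪Cv θ v, HT θ v⟫| with hgg_def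
  have hinnercont : Continuous fun p : ℝ × ℝ => |⟪Cv p.1 p.2, HT p.1 p.2⟫| :=
    (hCvcont.inner hHTcont).abs
  have hggcont : Continuous gg := by
    apply continuous_parametric_intervalIntegral_of_continuous'
      (f := fun v θ => |⟪Cv θ v, HT θ v⟫|) (μ := volume)
    exact hinnercont.comp continuous_swap
  have hggnonneg : ∀ v, 0 ≤ gg v := by
    intro v
    apply intervalIntegral.integral_nonneg hπ.le
    intro θ _; positivity
  have hf'cont : ∀ v, Continuous fun θ => c v + ⟪Cv θ v, HT θ v⟫ := by
    intro v
    exact continuous_const.add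
      ((hCvcont.comp (continuous_id.prodMk continuous_const)).inner
        (hHTcont.comp (continuous_id.prodMk continuous_const)))
  -- FTC over the full period
  have hftc : ∀ v, 2 * Real.pi * c v = -∫ θ in (0:ℝ)..(2 * Real.pi), ⟪Cv θ v, HT θ v⟫ := by
    intro v
    have h1 : ∫ θ in (0:ℝ)..(2 * Real.pi), (c v + ⟪Cv θ v, HT θ v⟫)
        = f (2 * Real.pi) v - f 0 v :=
      intervalIntegral.integral_eq_sub_of_hasDerivAt (fun θ _ => hf' θ v)
        ((hf'cont v).intervalIntegrable _ _)
    have hper0 : f (2 * Real.pi) v = f 0 v := by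
      have := hfper 0 v; rwa [zero_add] at this
    rw [hper0, sub_self] at h1
    rw [intervalIntegral.integral_add (intervalIntegrable_const)
      (((hCvcont.comp (continuous_id.prodMk continuous_const)).inner
        (hHTcont.comp (continuous_id.prodMk continuous_const))).intervalIntegrable _ _)] at h1
    simp only [intervalIntegral.integral_const, smul_eq_mul, sub_zero] at h1
    linarith
  have hcb : ∀ v, 2 * Real.pi * |c v| ≤ gg v := by
    intro v
    have h2 : |2 * Real.pi * c v| ≤ gg v := by
      rw [hftc v, abs_neg]
      exact intervalIntegral.abs_integral_le_integral_abs hπ.le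
    calc 2 * Real.pi * |c v| = |2 * Real.pi * c v| := by
          rw [abs_mul (2 * Real.pi) (c v), abs_of_pos hπ]
      _ ≤ gg v := h2
  -- key oscillation bound on a period window
  have hwindow : ∀ v, ∀ x ∈ Icc (0:ℝ) (2 * Real.pi), |f x v - f 0 v| ≤ gg v := by
    intro v x hx
    have hint : ∀ a b : ℝ, IntervalIntegrable (fun θ => c v + ⟪Cv θ v, HT θ v⟫) volume a b :=
      fun a b => (hf'cont v).intervalIntegrable a b
    have hintabs : ∀ a b : ℝ,
        IntervalIntegrable (fun θ => |c v + ⟪Cv θ v, HT θ v⟫|) volume a b :=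
      fun a b => ((hf'cont v).abs).intervalIntegrable a b
    have e1 : f x v - f 0 v = ∫ θ in (0:ℝ)..x, (c v + ⟪Cv θ v, HT θ v⟫) :=
      (intervalIntegral.integral_eq_sub_of_hasDerivAt (fun θ _ => hf' θ v) (hint 0 x)).symm
    have e2 : f (2 * Real.pi) v - f x v
        = ∫ θ in x..(2 * Real.pi), (c v + ⟪Cv θ v, HT θ v⟫) :=
      (intervalIntegral.integral_eq_sub_of_hasDerivAt (fun θ _ => hf' θ v)
        (hint x (2 * Real.pi))).symm
    have hper0 : f (2 * Real.pi) v = f 0 v := by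
      have := hfper 0 v; rwa [zero_add] at this
    have b1 : |f x v - f 0 v| ≤ ∫ θ in (0:ℝ)..x, |c v + ⟪Cv θ v, HT θ v⟫| := by
      rw [e1]
      exact intervalIntegral.abs_integral_le_integral_abs hx.1
    have b2 : |f x v - f 0 v| ≤ ∫ θ in x..(2 * Real.pi), |c v + ⟪Cv θ v, HT θ v⟫| := by
      have : |f x v - f 0 v| = |f (2 * Real.pi) v - f x v| := by
        rw [hper0, abs_sub_comm]
      rw [this, e2]
      exact intervalIntegral.abs_integral_le_integral_abs hx.2
    have badd : (∫ θ in (0:ℝ)..x, |c v + ⟪Cv θ v, HT θ v⟫|)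
        + ∫ θ in x..(2 * Real.pi), |c v + ⟪Cv θ v, HT θ v⟫|
        = ∫ θ in (0:ℝ)..(2 * Real.pi), |c v + ⟪Cv θ v, HT θ v⟫| :=
      intervalIntegral.integral_add_adjacent_intervals (hintabs 0 x) (hintabs x (2 * Real.pi))
    have btot : (∫ θ in (0:ℝ)..(2 * Real.pi), |c v + ⟪Cv θ v, HT θ v⟫|)
        ≤ ∫ θ in (0:ℝ)..(2 * Real.pi), (|c v| + |⟪Cv θ v, HT θ v⟫|) := by
      apply intervalIntegral.integral_mono_on hπ.le (hintabs 0 (2 * Real.pi))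
      · exact (intervalIntegrable_const.add
          (((hCvcont.comp (continuous_id.prodMk continuous_const)).inner
            (hHTcont.comp (continuous_id.prodMk continuous_const))).abs.intervalIntegrable _ _))
      · intro θ _; exact abs_add_le _ _
    have bsplit : (∫ θ in (0:ℝ)..(2 * Real.pi), (|c v| + |⟪Cv θ v, HT θ v⟫|))
        = 2 * Real.pi * |c v| + gg v := by
      rw [intervalIntegral.integral_add intervalIntegrable_const
        (((hCvcont.comp (continuous_id.prodMk continuous_const)).inner
          (hHTcont.comp (continuous_id.prodMk continuous_const))).abs.intervalIntegrable _ _)]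
      simp [hgg_def, mul_comm]
    have := hcb v
    linarith
  -- extend to all of ℝ by periodicity
  have hkey : ∀ v x, |f x v - f 0 v| ≤ gg v := by
    intro v x
    have hp : Function.Periodic (fun θ => f θ v) (2 * Real.pi) := fun θ => hfper θ v
    obtain ⟨y, hy, hxy⟩ := hp.exists_mem_Ico₀ hπ x
    have hxy' : f x v = f y v := hxy
    rw [hxy']
    exact hwindow v y ⟨hy.1, hy.2.le⟩
  -- construct φ
  set ψ : ℝ → ℝ := fun v => -(f 0 v / l v) with hψ_def
  have hf0cont : Continuous fun v => f 0 v :=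
    hfcont.comp (continuous_const.prodMk continuous_id)
  have hψcont : Continuous ψ := (hf0cont.div hlcont hlne).neg
  set φ : ℝ → ℝ := fun v => ∫ s in (0:ℝ)..v, ψ s with hφ_def
  have hφd : ∀ v, HasDerivAt φ (ψ v) v := fun v =>
    intervalIntegral.integral_hasDerivAt_right (hψcont.intervalIntegrable _ _)
      (hψcont.stronglyMeasurableAtFilter _ _) hψcont.continuousAt
  have hφderiv : deriv φ = ψ := funext fun v => (hφd v).deriv
  have hφ1 : ContDiff ℝ 1 φ := by
    rw [contDiff_one_iff_deriv]
    exact ⟨fun v => (hφd v).differentiableAt, hφderiv ▸ hψcont⟩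
  have hφcont : Continuous φ := hφ1.continuous
  refine ⟨φ, hφ1, ?_⟩
  -- pointwise computation of the integrand
  have hproj : ∀ θ v, ‖projT (Cθ (θ + φ v) v) (Cv (θ + φ v) v + deriv φ v • Cθ (θ + φ v) v)‖ ^ 2
      = (f (θ + φ v) v - f 0 v) ^ 2 := by
    intro θ v
    set x := θ + φ v with hx
    rw [hφderiv]
    unfold projT
    rw [hl x v]
    have hTnorm : ‖(l v)⁻¹ • Cθ x v‖ = 1 := by
      rw [norm_smul, hl, norm_inv, Real.norm_eq_abs, abs_of_pos (hlpos v),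
        inv_mul_cancel₀ (hlne v)]
    have hinner : ⟪Cv x v + ψ v • Cθ x v, (l v)⁻¹ • Cθ x v⟫ = f x v - f 0 v := by
      rw [inner_add_left, real_inner_smul_left,
        real_inner_smul_right (Cθ x v) (Cθ x v) ((l v)⁻¹),
        real_inner_self_eq_norm_sq, hl]
      have hfx : f x v = ⟪Cv x v, (l v)⁻¹ • Cθ x v⟫ := rfl
      rw [← hfx]
      simp only [hψ_def]
      field_simp [hlne v]
      ring
    rw [hinner, norm_smul, hTnorm, Real.norm_eq_abs, mul_one, sq_abs]
  -- final chain of inequalities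
  have hgoal_inner : ∀ v, (∫ θ in (0:ℝ)..(2 * Real.pi),
      ‖projT (Cθ (θ + φ v) v) (Cv (θ + φ v) v + deriv φ v • Cθ (θ + φ v) v)‖ ^ 2)
      = ∫ θ in (0:ℝ)..(2 * Real.pi), (f (θ + φ v) v - f 0 v) ^ 2 := fun v =>
    intervalIntegral.integral_congr fun θ _ => hproj θ v
  have hshiftcont : Continuous fun p : ℝ × ℝ => (f (p.2 + φ p.1) p.1 - f 0 p.1) ^ 2 := by
    apply Continuous.pow
    apply Continuous.sub
    · exact hfcont.comp ((continuous_snd.add (hφcont.comp continuous_fst)).prodMk continuous_fst)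
    · exact hf0cont.comp continuous_fst
  have hinner_le : ∀ v, (∫ θ in (0:ℝ)..(2 * Real.pi), (f (θ + φ v) v - f 0 v) ^ 2)
      ≤ 2 * Real.pi * gg v ^ 2 := by
    intro v
    have h1 : (∫ θ in (0:ℝ)..(2 * Real.pi), (f (θ + φ v) v - f 0 v) ^ 2)
        ≤ ∫ _θ in (0:ℝ)..(2 * Real.pi), gg v ^ 2 := by
      apply intervalIntegral.integral_mono_on hπ.le
      · exact ((hshiftcont.comp (continuous_const.prodMk continuous_id)).intervalIntegrable _ _)
      · exact intervalIntegrable_const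
      · intro θ _
        have h2 := hkey v (θ + φ v)
        calc (f (θ + φ v) v - f 0 v) ^ 2 = |f (θ + φ v) v - f 0 v| ^ 2 := (sq_abs _).symm
          _ ≤ gg v ^ 2 := by
            apply pow_le_pow_left₀ (abs_nonneg _) h2
    simpa [mul_comm] using h1
  have houter_int : IntervalIntegrable
      (fun v => ∫ θ in (0:ℝ)..(2 * Real.pi), (f (θ + φ v) v - f 0 v) ^ 2) volume 0 1 := by
    apply Continuous.intervalIntegrable
    apply continuous_parametric_intervalIntegral_of_continuous'
      (f := fun v θ => (f (θ + φ v) v - f 0 v) ^ 2) (μ := volume)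
    exact hshiftcont
  have hgg_int : IntervalIntegrable (fun v => 2 * Real.pi * gg v ^ 2) volume 0 1 :=
    (continuous_const.mul (hggcont.pow 2)).intervalIntegrable _ _
  have hggM : (∫ v in (0:ℝ)..1, gg v ^ 2) ≤ M := by
    have heq : (∫ v in (0:ℝ)..1, gg v ^ 2)
        = ∫ v in (0:ℝ)..1, (∫ θ in (0:ℝ)..(2 * Real.pi),
          |⟪(‖Cθ θ v‖⁻¹) • HT θ v, Cv θ v⟫| * ‖Cθ θ v‖) ^ 2 := by
      apply intervalIntegral.integral_congr
      intro v _
      simp only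
      congr 1
      apply intervalIntegral.integral_congr
      intro θ _
      simp only
      rw [hl, real_inner_smul_left, abs_mul, abs_inv, abs_of_pos (hlpos v),
        real_inner_comm (HT θ v)]
      rw [mul_comm ((l v)⁻¹) _, mul_assoc, inv_mul_cancel₀ (hlne v), mul_one]
    rw [heq]; exact hbound
  calc (∫ v in (0:ℝ)..1, ∫ θ in (0:ℝ)..(2 * Real.pi),
        ‖projT (Cθ (θ + φ v) v) (Cv (θ + φ v) v + deriv φ v • Cθ (θ + φ v) v)‖ ^ 2)
      = ∫ v in (0:ℝ)..1, ∫ θ in (0:ℝ)..(2 * Real.pi), (f (θ + φ v) v - f 0 v) ^ 2 :=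
        intervalIntegral.integral_congr fun v _ => hgoal_inner v
    _ ≤ ∫ v in (0:ℝ)..1, 2 * Real.pi * gg v ^ 2 :=
        intervalIntegral.integral_mono_on zero_le_one houter_int hgg_int fun v _ => hinner_le v
    _ = 2 * Real.pi * ∫ v in (0:ℝ)..1, gg v ^ 2 := by
        rw [intervalIntegral.integral_const_mul]
    _ ≤ 2 * Real.pi * M := by
        apply mul_le_mul_of_nonneg_left hggM hπ.le
end
end
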